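/- arXiv:2504.20963 — 3 statements merged into one kernel-verified Lean document; each statement's English description precedes it below -/
import Mathlib

section
/- Let ρ ∈ (1, 2] and let (W, V) be a pair of nonnegative random variables on a probability space with E[W] = 1, E[V] < 1, and E[e^{δ(W+V)}] < ∞ for some δ > 0. Then there exist constants K > 0 and θ̄ > 0 such that G_K(λ) := E[exp(λ (W − 1) + K λ^ρ (V − 1))] ≤ 1 for all λ ∈ [0, θ̄]. -/
open MeasureTheory Real
open scoped ENNReal

open MeasureTheory Real intervalIntegral

lemma exp_quad_bound (x : ℝ) : Real.exp x ≤ 1 + x + x ^ 2 / 2 * Real.exp (max x 0) := by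
  rcases le_or_gt 0 x with hx | hx
  · rw [max_eq_left hx]
    have hkey : ∫ t in (0:ℝ)..x, (Real.exp t - 1) ≤ ∫ t in (0:ℝ)..x, t * Real.exp x := by
      apply intervalIntegral.integral_mono_on hx
      · exact (Real.continuous_exp.sub continuous_const).intervalIntegrable _ _
      · exact (continuous_id.mul continuous_const).intervalIntegrable _ _
      · intro t ht
        obtain ⟨ht0, htx⟩ := ht
        have h1 : Real.exp t - 1 ≤ t * Real.exp t := by
          have hh := mul_le_mul_of_nonneg_right (Real.add_one_le_exp (-t)) (Real.exp_pos t).le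
          rw [← Real.exp_add] at hh
          simp at hh
          nlinarith
        have h2 : t * Real.exp t ≤ t * Real.exp x :=
          mul_le_mul_of_nonneg_left (Real.exp_le_exp.mpr htx) ht0
        linarith
    have e1 : ∫ t in (0:ℝ)..x, (Real.exp t - 1) = Real.exp x - 1 - x := by
      rw [intervalIntegral.integral_sub ((Real.continuous_exp).intervalIntegrable _ _)
        (continuous_const.intervalIntegrable _ _)]
      simp [integral_exp]
    have e2 : ∫ t in (0:ℝ)..x, t * Real.exp x = x ^ 2 / 2 * Real.exp x := by
      rw [intervalIntegral.integral_mul_const]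
      simp [integral_id]
    rw [e1, e2] at hkey
    linarith
  · rw [max_eq_right hx.le, Real.exp_zero]
    have hkey : ∫ t in x..(0:ℝ), (t:ℝ) ≤ ∫ t in x..(0:ℝ), (Real.exp t - 1) := by
      apply intervalIntegral.integral_mono_on hx.le
      · exact continuous_id.intervalIntegrable _ _
      · exact (Real.continuous_exp.sub continuous_const).intervalIntegrable _ _
      · intro t _
        have := Real.add_one_le_exp t
        linarith
    have e1 : ∫ t in x..(0:ℝ), (Real.exp t - 1) = 1 - Real.exp x + x := by
      rw [intervalIntegral.integral_sub ((Real.continuous_exp).intervalIntegrable _ _)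
        (continuous_const.intervalIntegrable _ _)]
      simp [integral_exp]
    have e2 : ∫ t in x..(0:ℝ), (t:ℝ) = - x ^ 2 / 2 := by
      simp [integral_id]
    rw [e1, e2] at hkey
    nlinarith


set_option maxHeartbeats 1000000 in
/-- **Key estimate in the proof of Lemma 2.1 (Rösler-type bound).**
Let `ρ ∈ (1, 2]` and let `(W, V)` be a pair of nonnegative random variables on a probability
space with `E[W] = 1`, `E[V] < 1`, and `E[e^{δ(W+V)}] < ∞` for some `δ > 0`. Then there exist
constants `K > 0` and `θ̄ > 0` such that
`G_K(λ) := E[exp (λ (W − 1) + K λ^ρ (V − 1))] ≤ 1` for all `λ ∈ [0, θ̄]`. -/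
theorem perturbed_mgf_le_one
    {Ω : Type*} [MeasurableSpace Ω] (P : Measure Ω) [IsProbabilityMeasure P]
    (ρ : ℝ) (hρ : ρ ∈ Set.Ioc (1 : ℝ) 2)
    (W V : Ω → ℝ) (hWmeas : Measurable W) (hVmeas : Measurable V)
    (hWpos : ∀ ω, 0 ≤ W ω) (hVpos : ∀ ω, 0 ≤ V ω)
    (hWint : Integrable W P) (hWmean : ∫ ω, W ω ∂P = 1)
    (hVint : Integrable V P) (hVmean : ∫ ω, V ω ∂P < 1)
    (hexp : ∃ δ > (0 : ℝ), ∫⁻ ω, ENNReal.ofReal (exp (δ * (W ω + V ω))) ∂P < ⊤) :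
    ∃ K > (0 : ℝ), ∃ θbar > (0 : ℝ), ∀ lam ∈ Set.Icc (0 : ℝ) θbar,
      ∫⁻ ω, ENNReal.ofReal (exp (lam * (W ω - 1) + K * lam ^ ρ * (V ω - 1))) ∂P ≤ 1 := by
  obtain ⟨δ, hδ, hfin⟩ := hexp
  obtain ⟨hρ1, hρ2⟩ := hρ
  set m := ∫ ω, V ω ∂P with hm
  have hm1 : 0 < 1 - m := by linarith
  -- integrability of the exponential moment
  have hEmeas : Measurable fun ω => exp (δ * (W ω + V ω)) :=
    (Real.measurable_exp).comp (measurable_const.mul (hWmeas.add hVmeas))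
  have hEint : Integrable (fun ω => exp (δ * (W ω + V ω))) P := by
    refine ⟨hEmeas.aestronglyMeasurable, ?_⟩
    rw [hasFiniteIntegral_iff_ofReal (ae_of_all _ fun ω => (Real.exp_pos _).le)]
    exact hfin
  -- the dominating quadratic-weight function g
  set g : Ω → ℝ := fun ω => (W ω + V ω + 2) ^ 2 * exp (δ / 2 * (W ω + V ω)) with hg
  have hgmeas : Measurable g :=
    (((hWmeas.add hVmeas).add measurable_const).pow_const 2).mul
      ((Real.measurable_exp).comp (measurable_const.mul (hWmeas.add hVmeas)))
  have hg0 : ∀ ω, 0 ≤ g ω := fun ω => mul_nonneg (sq_nonneg _) (Real.exp_pos _).le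
  have hgle : ∀ ω, g ω ≤ (32 / δ ^ 2 + 8) * exp (δ * (W ω + V ω)) := by
    intro ω
    have ht0 : 0 ≤ W ω + V ω := add_nonneg (hWpos ω) (hVpos ω)
    have hd2 : (0:ℝ) < δ ^ 2 := by positivity
    have h1 : δ / 4 * (W ω + V ω) + 1 ≤ exp (δ / 4 * (W ω + V ω)) := Real.add_one_le_exp _
    have h2 : exp (δ / 4 * (W ω + V ω)) * exp (δ / 4 * (W ω + V ω))
        = exp (δ / 2 * (W ω + V ω)) := by rw [← Real.exp_add]; ring_nf
    have h3 : exp (δ / 2 * (W ω + V ω)) * exp (δ / 2 * (W ω + V ω))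
        = exp (δ * (W ω + V ω)) := by rw [← Real.exp_add]; ring_nf
    have hnn : 0 ≤ δ / 4 * (W ω + V ω) := by positivity
    have hsq : (δ / 4 * (W ω + V ω) + 1) * (δ / 4 * (W ω + V ω) + 1)
        ≤ exp (δ / 2 * (W ω + V ω)) := by
      calc (δ / 4 * (W ω + V ω) + 1) * (δ / 4 * (W ω + V ω) + 1)
          ≤ exp (δ / 4 * (W ω + V ω)) * exp (δ / 4 * (W ω + V ω)) :=
            mul_le_mul h1 h1 (by linarith) (Real.exp_pos _).le
        _ = exp (δ / 2 * (W ω + V ω)) := h2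
    have h6 : (W ω + V ω) ^ 2 ≤ 16 / δ ^ 2 * exp (δ / 2 * (W ω + V ω)) := by
      rw [div_mul_eq_mul_div, le_div_iff₀ hd2]
      nlinarith
    have h7 : (1:ℝ) ≤ exp (δ / 2 * (W ω + V ω)) := by
      rw [← Real.exp_zero]; exact Real.exp_le_exp.mpr (by positivity)
    have h5 : (W ω + V ω + 2) ^ 2 ≤ (32 / δ ^ 2 + 8) * exp (δ / 2 * (W ω + V ω)) := by
      have hexpand : (32 / δ ^ 2 + 8) * exp (δ / 2 * (W ω + V ω))
          = 2 * (16 / δ ^ 2 * exp (δ / 2 * (W ω + V ω))) + 8 * exp (δ / 2 * (W ω + V ω)) := by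
        ring
      rw [hexpand]
      nlinarith [sq_nonneg (W ω + V ω - 2)]
    calc g ω = (W ω + V ω + 2) ^ 2 * exp (δ / 2 * (W ω + V ω)) := rfl
      _ ≤ ((32 / δ ^ 2 + 8) * exp (δ / 2 * (W ω + V ω))) * exp (δ / 2 * (W ω + V ω)) :=
          mul_le_mul_of_nonneg_right h5 (Real.exp_pos _).le
      _ = (32 / δ ^ 2 + 8) * exp (δ * (W ω + V ω)) := by rw [mul_assoc, h3]
  have hgint : Integrable g P := by
    refine Integrable.mono' (hEint.const_mul (32 / δ ^ 2 + 8)) hgmeas.aestronglyMeasurable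
      (ae_of_all _ fun ω => ?_)
    rw [Real.norm_of_nonneg (hg0 ω)]
    exact hgle ω
  set Cg := ∫ ω, g ω ∂P with hCg
  have hCg0 : 0 ≤ Cg := integral_nonneg hg0
  set K := 2 * (Cg + 1) / (1 - m) with hK
  have hK0 : 0 < K := by positivity
  have hKm : K * (1 - m) = 2 * (Cg + 1) := by
    rw [hK]; field_simp
  refine ⟨K, hK0, min 1 (min ((1 - m) / (2 * K * Cg + 1)) (δ / (2 * (1 + K)))), ?_, ?_⟩
  · refine lt_min one_pos (lt_min ?_ ?_) <;> positivity
  intro lam hlam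
  obtain ⟨h0lam, hlamθ⟩ := hlam
  have hlam1 : lam ≤ 1 := hlamθ.trans (min_le_left _ _)
  have hlam2 : lam * (2 * K * Cg + 1) ≤ 1 - m := by
    have := hlamθ.trans ((min_le_right _ _).trans (min_le_left _ _))
    rwa [le_div_iff₀ (by positivity)] at this
  have hlam3 : lam * (2 * (1 + K)) ≤ δ := by
    have := hlamθ.trans ((min_le_right _ _).trans (min_le_right _ _))
    rwa [le_div_iff₀ (by positivity)] at this
  -- basic rpow facts
  have hρ0 : (0:ℝ) < ρ := by linarith
  have hrnn : 0 ≤ lam ^ ρ := Real.rpow_nonneg h0lam ρ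
  have hrle : lam ^ ρ ≤ lam := by
    rcases eq_or_lt_of_le h0lam with h | h
    · rw [← h, Real.zero_rpow hρ0.ne']
    · calc lam ^ ρ ≤ lam ^ (1:ℝ) := Real.rpow_le_rpow_of_exponent_ge h hlam1 hρ1.le
        _ = lam := Real.rpow_one lam
  have hr2 : lam ^ (2:ℕ) ≤ lam ^ ρ := by
    rcases eq_or_lt_of_le h0lam with h | h
    · rw [← h, Real.zero_rpow hρ0.ne']
      norm_num
    · calc lam ^ (2:ℕ) = lam ^ ((2:ℕ):ℝ) := (Real.rpow_natCast lam 2).symm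
        _ ≤ lam ^ ρ := by
            apply Real.rpow_le_rpow_of_exponent_ge h hlam1
            norm_num [hρ2]
  set b := K * lam ^ ρ with hb
  have hb0 : 0 ≤ b := mul_nonneg hK0.le hrnn
  have hab : lam + b ≤ δ / 2 := by
    have h1 : b ≤ K * lam := mul_le_mul_of_nonneg_left hrle hK0.le
    nlinarith
  -- the key numeric inequality
  have hkey : 1 / 2 * (lam + b) ^ 2 * Cg ≤ b * (1 - m) := by
    have hterm1 : lam ^ 2 * Cg ≤ b * (1 - m) / 2 := by
      have h2 : lam ^ ρ * (K * (1 - m)) = lam ^ ρ * (2 * (Cg + 1)) := by rw [hKm]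
      have h3 : lam ^ 2 * Cg ≤ lam ^ ρ * Cg := by
        have := mul_le_mul_of_nonneg_right hr2 hCg0
        simpa using this
      nlinarith
    have hterm2 : b ^ 2 * Cg ≤ b * (1 - m) / 2 := by
      have h1 : K * lam ^ ρ * Cg ≤ (1 - m) / 2 := by
        have h4 : K * lam ^ ρ * Cg ≤ K * lam * Cg := by
          apply mul_le_mul_of_nonneg_right _ hCg0
          exact mul_le_mul_of_nonneg_left hrle hK0.le
        nlinarith
      calc b ^ 2 * Cg = b * (K * lam ^ ρ * Cg) := by rw [hb]; ring
        _ ≤ b * ((1 - m) / 2) := mul_le_mul_of_nonneg_left h1 hb0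
        _ = b * (1 - m) / 2 := by ring
    nlinarith [mul_nonneg (sq_nonneg (lam - b)) hCg0]
  -- pointwise bound
  have hptwise : ∀ ω, exp (lam * (W ω - 1) + b * (V ω - 1))
      ≤ 1 + (lam * (W ω - 1) + b * (V ω - 1)) + 1 / 2 * (lam + b) ^ 2 * g ω := by
    intro ω
    set x := lam * (W ω - 1) + b * (V ω - 1) with hx
    have hq := exp_quad_bound x
    have htW := hWpos ω
    have htV := hVpos ω
    have hM : |x| ≤ (lam + b) * (W ω + V ω + 2) := by
      rw [abs_le, hx]
      constructor <;>
        nlinarith [mul_nonneg h0lam htW, mul_nonneg hb0 htV, mul_nonneg h0lam htV,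
          mul_nonneg hb0 htW]
    have hX2 : x ^ 2 ≤ (lam + b) ^ 2 * (W ω + V ω + 2) ^ 2 := by
      rw [← mul_pow]
      calc x ^ 2 = |x| ^ 2 := (sq_abs _).symm
        _ ≤ ((lam + b) * (W ω + V ω + 2)) ^ 2 := by
            apply pow_le_pow_left₀ (abs_nonneg _) hM
    have hmaxle : max x 0 ≤ δ / 2 * (W ω + V ω) := by
      apply max_le _ (by positivity)
      have hd : 0 ≤ δ / 2 - (lam + b) := by linarith
      nlinarith [mul_nonneg h0lam htV, mul_nonneg hb0 htW,
        mul_nonneg hd (add_nonneg htW htV)]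
    have hexpmax : exp (max x 0) ≤ exp (δ / 2 * (W ω + V ω)) := Real.exp_le_exp.mpr hmaxle
    have hfinal : x ^ 2 / 2 * exp (max x 0) ≤ 1 / 2 * (lam + b) ^ 2 * g ω := by
      calc x ^ 2 / 2 * exp (max x 0)
          ≤ (lam + b) ^ 2 * (W ω + V ω + 2) ^ 2 / 2 * exp (δ / 2 * (W ω + V ω)) := by
            gcongr
            all_goals first | exact hX2 | exact hmaxle
        _ = 1 / 2 * (lam + b) ^ 2 * ((W ω + V ω + 2) ^ 2 * exp (δ / 2 * (W ω + V ω))) := by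
            ring
        _ = 1 / 2 * (lam + b) ^ 2 * g ω := rfl
    linarith
  -- integrability
  have hI1 : Integrable (fun ω => lam * (W ω - 1)) P :=
    (hWint.sub (integrable_const 1)).const_mul lam
  have hI2 : Integrable (fun ω => b * (V ω - 1)) P :=
    (hVint.sub (integrable_const 1)).const_mul b
  have hXint : Integrable (fun ω => lam * (W ω - 1) + b * (V ω - 1)) P := hI1.add hI2
  have hI3 : Integrable (fun ω => 1 / 2 * (lam + b) ^ 2 * g ω) P := hgint.const_mul _
  have hI12 : Integrable (fun ω => 1 + (lam * (W ω - 1) + b * (V ω - 1))) P :=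
    (integrable_const 1).add hXint
  have hhint : Integrable (fun ω => 1 + (lam * (W ω - 1) + b * (V ω - 1))
      + 1 / 2 * (lam + b) ^ 2 * g ω) P := hI12.add hI3
  have hh0 : ∀ ω, 0 ≤ 1 + (lam * (W ω - 1) + b * (V ω - 1)) + 1 / 2 * (lam + b) ^ 2 * g ω :=
    fun ω => le_trans (Real.exp_pos _).le (hptwise ω)
  -- value of the integral of the majorant
  have hXval : ∫ ω, (lam * (W ω - 1) + b * (V ω - 1)) ∂P = b * (m - 1) := by
    rw [integral_add hI1 hI2, MeasureTheory.integral_const_mul, MeasureTheory.integral_const_mul,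
      integral_sub hWint (integrable_const 1), integral_sub hVint (integrable_const 1)]
    simp [hWmean, ← hm]
  have hhval : ∫ ω, (1 + (lam * (W ω - 1) + b * (V ω - 1))
      + 1 / 2 * (lam + b) ^ 2 * g ω) ∂P = 1 + b * (m - 1) + 1 / 2 * (lam + b) ^ 2 * Cg := by
    rw [integral_add hI12 hI3, integral_add (integrable_const 1) hXint,
      MeasureTheory.integral_const_mul, hXval]
    simp [← hCg]
  have hhle1 : ∫ ω, (1 + (lam * (W ω - 1) + b * (V ω - 1))
      + 1 / 2 * (lam + b) ^ 2 * g ω) ∂P ≤ 1 := by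
    rw [hhval]; nlinarith
  calc ∫⁻ ω, ENNReal.ofReal (exp (lam * (W ω - 1) + b * (V ω - 1))) ∂P
      ≤ ∫⁻ ω, ENNReal.ofReal (1 + (lam * (W ω - 1) + b * (V ω - 1))
          + 1 / 2 * (lam + b) ^ 2 * g ω) ∂P :=
        lintegral_mono fun ω => ENNReal.ofReal_le_ofReal (hptwise ω)
    _ = ENNReal.ofReal (∫ ω, (1 + (lam * (W ω - 1) + b * (V ω - 1))
          + 1 / 2 * (lam + b) ^ 2 * g ω) ∂P) :=
        (ofReal_integral_eq_lintegral_ofReal hhint (ae_of_all _ hh0)).symm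
    _ ≤ 1 := by
        rw [← ENNReal.ofReal_one]
        exact ENNReal.ofReal_le_ofReal hhle1
end

section
/- For j ≥ 0, let L(j) denote the number of visits of the conditioned walk (S_n^+) to the interval [j, j+1) before its first entry into [j+2, ∞), when started from a point of [j, j+1). Then L(j) is stochastically dominated by a geometric random variable whose success probability is bounded below uniformly in j; in particular, there exist constants C₃, c₃ > 0 independent of j such that sup_{y ∈ [j, j+1)} P_y(L(j) ≥ m) ≤ C₃ e^{−c₃ m} for all m ≥ 1. -/
open MeasureTheory Filter Real
open scoped ENNReal NNReal

attribute [local instance] Classical.propDecidable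

noncomputable section

/-- `exp` on `[0,∞]`, with `exp ∞ = ∞`. -/
def expE (r : ℝ≥0∞) : ℝ≥0∞ := if r = ⊤ then ⊤ else ENNReal.ofReal (exp r.toReal)

/-- Partial sums of a sequence of steps: the walk started at `0`. -/
def Swalk {Ω₀ : Type*} (ξ : ℕ → Ω₀ → ℝ) (n : ℕ) (ω : Ω₀) : ℝ := ∑ k ∈ Finset.range n, ξ k ω

/-- `(ξ k)` are i.i.d. with common law `μ` under `P₀`. -/
structure IsIIDSteps {Ω₀ : Type*} [MeasurableSpace Ω₀] (P₀ : Measure Ω₀) (ξ : ℕ → Ω₀ → ℝ)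
    (μ : Measure ℝ) : Prop where
  meas : ∀ k, Measurable (ξ k)
  indep : ProbabilityTheory.iIndepFun ξ P₀
  ident : ∀ k, Measure.map (ξ k) P₀ = μ

/-- The renewal function of the strictly descending ladder heights of the walk `(S_n)`:
`R(u) = 𝐄[∑_{j=0}^{τ⁺ - 1} 1{S_j ≥ -u}]` where `τ⁺ = inf {n ≥ 1 : S_n ≥ 0}`, the walk being
realized with i.i.d. steps `ξ` on an auxiliary probability space `(Ω₀, P₀)`. -/
def renewalR {Ω₀ : Type*} [MeasurableSpace Ω₀] (P₀ : Measure Ω₀) (ξ : ℕ → Ω₀ → ℝ)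
    (u : ℝ) : ℝ :=
  (∫⁻ ω, ∑' j : ℕ,
      (if -u ≤ Swalk ξ j ω ∧ ∀ m, 1 ≤ m → m ≤ j → Swalk ξ m ω < 0 then (1 : ℝ≥0∞) else 0)
    ∂P₀).toReal

/-- A centered, finite-variance, non-arithmetic random walk together with the family
`(𝐏_x)_{x ≥ 0}` of laws of the associated walk Doob-conditioned (via the harmonic renewal
function `R` of the descending ladder heights) to stay nonnegative, started at `x`.
The conditioned chain is `(S⁺_n)_{n ≥ 0} = Sp`. -/
structure CondWalk (Ω Ω₀ : Type*) [MeasurableSpace Ω] [MeasurableSpace Ω₀] where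
  /-- the step distribution of the underlying random walk -/
  μ : Measure ℝ
  prob_μ : IsProbabilityMeasure μ
  integrable_id : Integrable id μ
  /-- centered steps -/
  centered : ∫ z, z ∂μ = 0
  /-- finite variance -/
  finite_variance : ∫⁻ z, ENNReal.ofReal (z ^ 2) ∂μ < ⊤
  /-- non-arithmetic step distribution -/
  nonarithmetic : ¬ ∃ h > (0 : ℝ), μ {z : ℝ | ∃ k : ℤ, z = k * h} = 1
  /-- an auxiliary realization of the (unconditioned) walk, used to define `R` -/
  P₀ : Measure Ω₀
  prob_P₀ : IsProbabilityMeasure P₀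
  ξ : ℕ → Ω₀ → ℝ
  iid : IsIIDSteps P₀ ξ μ
  /-- `Pf x` is the law `𝐏_x` of the conditioned walk started at `x ≥ 0` -/
  Pf : ℝ → Measure Ω
  prob_Pf : ∀ x, 0 ≤ x → IsProbabilityMeasure (Pf x)
  /-- the conditioned walk `(S⁺_n)` -/
  Sp : ℕ → Ω → ℝ
  meas_Sp : ∀ n, Measurable (Sp n)
  start : ∀ x, 0 ≤ x → ∀ᵐ ω ∂Pf x, Sp 0 ω = x
  nonneg : ∀ x, 0 ≤ x → ∀ n, ∀ᵐ ω ∂Pf x, 0 ≤ Sp n ω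
  /-- Markov property with the Doob `h`-transform transition kernel
  `P(S⁺_{n+1} ∈ dy ∣ S⁺_n = s) = (R(y)/R(s)) 1{y ≥ 0} μ(dy − s)`. -/
  markov_doob : ∀ x, 0 ≤ x → ∀ n : ℕ,
    ∀ H : (ℕ → ℝ) → ℝ≥0∞, Measurable H →
      (∀ f g : ℕ → ℝ, (∀ k ≤ n, f k = g k) → H f = H g) →
    ∀ G : ℝ → ℝ≥0∞, Measurable G →
      ∫⁻ ω, H (fun k => Sp k ω) * G (Sp (n + 1) ω) ∂Pf x
        = ∫⁻ ω, H (fun k => Sp k ω) *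
            ((ENNReal.ofReal (renewalR P₀ ξ (Sp n ω)))⁻¹ *
              ∫⁻ z, ENNReal.ofReal (renewalR P₀ ξ (Sp n ω + z)) *
                (if 0 ≤ Sp n ω + z then G (Sp n ω + z) else 0) ∂μ) ∂Pf x

/-- A conditioned walk together with a coupled sequence `(Q_n)_{n ≥ 1}` of nonnegative
random variables such that, conditionally on `(S⁺_j, Q_j), 1 ≤ j ≤ n`, the law of
`(S⁺_{n+1}, Q_{n+1})` is that of `(S⁺_1, Q_1)` under `𝐏_{S⁺_n}`. -/
structure CondWalkQ (Ω Ω₀ : Type*) [MeasurableSpace Ω] [MeasurableSpace Ω₀]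
    extends CondWalk Ω Ω₀ where
  /-- the coupled sequence `(Q_n)_{n ≥ 1}` -/
  Q : ℕ → Ω → ℝ
  meas_Q : ∀ n, Measurable (Q n)
  nonneg_Q : ∀ x, 0 ≤ x → ∀ n, 1 ≤ n → ∀ᵐ ω ∂Pf x, 0 ≤ Q n ω
  /-- `E[f(S⁺_{n+1}, Q_{n+1}) ∣ (S⁺_j, Q_j), 1 ≤ j ≤ n] = g(S⁺_n)` with
  `g(x) = E_x[f(S⁺_1, Q_1)]`. -/
  cond_law : ∀ x, 0 ≤ x → ∀ n : ℕ, 1 ≤ n →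
    ∀ F : ℝ × ℝ → ℝ≥0∞, Measurable F →
    ∀ H : (ℕ → ℝ × ℝ) → ℝ≥0∞, Measurable H →
      (∀ f g : ℕ → ℝ × ℝ, (∀ k, 1 ≤ k → k ≤ n → f k = g k) → H f = H g) →
      ∫⁻ ω, H (fun k => (Sp k ω, Q k ω)) * F (Sp (n + 1) ω, Q (n + 1) ω) ∂Pf x
        = ∫⁻ ω, H (fun k => (Sp k ω, Q k ω)) *
            (∫⁻ ω', F (Sp 1 ω', Q 1 ω') ∂Pf (Sp n ω)) ∂Pf x

end
noncomputable section

/-- `L(j)`: the number of visits of the conditioned walk to `[j, j+1)` strictly before its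
first entry (at a time `≥ 1`) into `[j+2, ∞)`, with values in `[0,∞]`. -/
def localTimeL {Ω Ω₀ : Type*} [MeasurableSpace Ω] [MeasurableSpace Ω₀]
    (cw : CondWalk Ω Ω₀) (j : ℕ) (ω : Ω) : ℝ≥0∞ :=
  ∑' k : ℕ,
    if (∀ l, 1 ≤ l → l ≤ k → cw.Sp l ω < (j : ℝ) + 2) ∧
        cw.Sp k ω ∈ Set.Ico (j : ℝ) ((j : ℝ) + 1) then 1 else 0

end

/-!
Since `μ` is centred and not concentrated at `0`, some `δ > 0` has `q := μ [δ, ∞) > 0`. The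
renewal function `R` is nondecreasing, so the Doob transform only favours upward steps: from any
state the conditioned walk climbs by at least `δ` in one step with probability at least `q`. Take
`N` with `N δ ≥ 2`. After each counted visit to `[j, j + 1)`, with probability at least `q ^ N`
the walk climbs `N` times in a row and is above `j + 2` before `N` further visits; hence
`P_y(L ≥ m + N) ≤ (1 - q ^ N) P_y(L ≥ m)`, and iterating gives a geometric tail whose constants
depend only on `q` and `N`.
-/

namespace Nat

variable {p : ℕ → Prop} [DecidablePred p]

lemma exists_count_eq_of_lt_count {m n : ℕ} (h : m < count p n) :
    ∃ t < n, p t ∧ count p t = m := by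
  have hlt : ∀ hf : (Set.ofPred p).Finite, m < hf.toFinset.card :=
    fun hf => h.trans_le (count_le_card hf n)
  exact ⟨nth p m, nth_lt_of_lt_count h, nth_mem m hlt, count_nth hlt⟩

lemma tsum_ite_eq_iSup_count :
    ∑' k, (if p k then 1 else 0 : ℝ≥0∞) = ⨆ n, (count p n : ℝ≥0∞) := by
  simp only [ENNReal.tsum_eq_iSup_nat, Finset.sum_boole, count_eq_card_filter_range]

lemma natCast_add_one_le_tsum_ite_iff {m : ℕ} :
    ((m + 1 : ℕ) : ℝ≥0∞) ≤ ∑' k, (if p k then 1 else 0 : ℝ≥0∞) ↔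
      ∃ t, p t ∧ count p t = m := by
  rw [tsum_ite_eq_iSup_count]
  constructor
  · intro h
    by_contra! hne
    have hle : ∀ n, count p n ≤ m := fun n => by
      by_contra! hlt
      obtain ⟨t, -, ht, htm⟩ := exists_count_eq_of_lt_count hlt
      exact hne t ht htm
    have : ⨆ n, (count p n : ℝ≥0∞) ≤ m := iSup_le fun n => by exact_mod_cast hle n
    exact absurd (h.trans this) (by exact_mod_cast (Nat.lt_succ_self m).not_ge)
  · rintro ⟨t, ht, rfl⟩
    refine le_iSup_of_le (t + 1) ?_
    rw [count_succ, if_pos ht]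

lemma tsum_ite_eq_count_of_forall_ge {n : ℕ} (h : ∀ k ≥ n, ¬ p k) :
    ∑' k, (if p k then 1 else 0 : ℝ≥0∞) = count p n := by
  rw [tsum_eq_sum (s := Finset.range n) fun k hk => if_neg (h k (by simpa using hk)),
    Finset.sum_boole, count_eq_card_filter_range]

end Nat

lemma exists_geometric_tail_bound {r : ℝ≥0∞} (hr : r < 1) {N : ℕ} (hN : 0 < N) :
    ∃ C > (0 : ℝ), ∃ c > (0 : ℝ), ∀ u : ℕ → ℝ≥0∞, Antitone u → u 0 ≤ 1 →
      (∀ m, u (m + N) ≤ r * u m) →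
        ∀ m : ℕ, u m ≤ ENNReal.ofReal (C * exp (-c * (m + 1))) := by
  set ρ : ℝ := max r.toReal (1 / 2)
  have hρ0 : 0 < ρ := lt_max_of_lt_right one_half_pos
  have hρ1 : ρ < 1 :=
    max_lt (ENNReal.toReal_lt_of_lt_ofReal (by rwa [ENNReal.ofReal_one])) one_half_lt_one
  have hrρ : r ≤ ENNReal.ofReal ρ :=
    (ENNReal.le_ofReal_iff_toReal_le hr.ne_top hρ0.le).mpr (le_max_left _ _)
  have hlog : log ρ < 0 := log_neg hρ0 hρ1
  have hNR : (0 : ℝ) < N := Nat.cast_pos.mpr hN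
  refine ⟨ρ⁻¹, inv_pos.mpr hρ0, -log ρ / N, div_pos (neg_pos.mpr hlog) hNR,
    fun u hu hu0 hrec m => ?_⟩
  have hpow : ∀ k, u (k * N) ≤ ENNReal.ofReal ρ ^ k := by
    intro k
    induction k with
    | zero => simpa using hu0
    | succ k ih =>
      calc u ((k + 1) * N) = u (k * N + N) := by rw [add_one_mul]
        _ ≤ r * u (k * N) := hrec _
        _ ≤ ENNReal.ofReal ρ * ENNReal.ofReal ρ ^ k := by gcongr
        _ = ENNReal.ofReal ρ ^ (k + 1) := (pow_succ' _ _).symm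
  have hmN : (m + 1 : ℝ) / N - 1 ≤ (m / N : ℕ) := by
    rw [sub_le_iff_le_add, div_le_iff₀ hNR]
    have := Nat.lt_div_mul_add (a := m) hN
    exact_mod_cast (by rw [add_one_mul]; omega : m + 1 ≤ (m / N + 1) * N)
  calc u m ≤ u (m / N * N) := hu (Nat.div_mul_le_self m N)
    _ ≤ ENNReal.ofReal ρ ^ (m / N) := hpow _
    _ = ENNReal.ofReal (exp (log ρ * (m / N : ℕ))) := by
        rw [← ENNReal.ofReal_pow hρ0.le, mul_comm, ← log_pow, exp_log (pow_pos hρ0 _)]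
    _ ≤ ENNReal.ofReal (exp (log ρ * ((m + 1) / N - 1))) :=
        ENNReal.ofReal_le_ofReal (exp_le_exp.mpr (mul_le_mul_of_nonpos_left hmN hlog.le))
    _ = ENNReal.ofReal (ρ⁻¹ * exp (-(-log ρ / N) * (m + 1))) := by
        rw [mul_sub, mul_one, exp_sub, exp_log hρ0, div_eq_inv_mul]
        congr 1
        field_simp

lemma exists_pos_measure_Ici_ne_zero_of_integral_eq_zero {μ : Measure ℝ}
    (hint : Integrable id μ) (hmean : ∫ z, z ∂μ = 0) (hne : ¬ ∀ᵐ z ∂μ, z = 0) :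
    ∃ δ > 0, μ (Set.Ici δ) ≠ 0 := by
  by_contra! h
  have hpos : μ (Set.Ioi 0) = 0 := by
    refine measure_mono_null (fun z (hz : 0 < z) => ?_)
      (measure_iUnion_null fun n : ℕ => h (1 / (n + 1)) Nat.one_div_pos_of_nat)
    obtain ⟨n, hn⟩ := exists_nat_one_div_lt hz
    exact Set.mem_iUnion.mpr ⟨n, hn.le⟩
  have hnonneg : 0 ≤ᵐ[μ] fun z => -z := by
    refine ae_iff.mpr ?_
    convert hpos using 2
    ext z
    simp
  have hzero := (integral_eq_zero_iff_of_nonneg_ae hnonneg hint.neg).mp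
    (by rw [integral_neg, hmean, neg_zero])
  exact hne (hzero.mono fun z hz => neg_eq_zero.mp hz)

lemma renewalR_le_renewalR {Ω₀ : Type*} [MeasurableSpace Ω₀] {P₀ : Measure Ω₀}
    {ξ : ℕ → Ω₀ → ℝ} {x y : ℝ} (hxy : x ≤ y) (hy : 0 < renewalR P₀ ξ y) :
    renewalR P₀ ξ x ≤ renewalR P₀ ξ y := by
  refine ENNReal.toReal_mono (ENNReal.toReal_pos_iff.mp hy).2.ne
    (lintegral_mono fun ω => ENNReal.tsum_le_tsum fun k => ?_)
  by_cases hk : -x ≤ Swalk ξ k ω ∧ ∀ m, 1 ≤ m → m ≤ k → Swalk ξ m ω < 0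
  · rw [if_pos hk, if_pos ⟨by linarith [hk.1], hk.2⟩]
  · rw [if_neg hk]
    exact zero_le

def IsCountedVisit (a : ℝ) (f : ℕ → ℝ) (k : ℕ) : Prop :=
  (∀ l, 1 ≤ l → l ≤ k → f l < a + 2) ∧ f k ∈ Set.Ico a (a + 1)

/-- The `(m + 1)`-st counted visit of `f` to `[a, a + 1)` happens at time `t`. -/
def visitAt (a : ℝ) (m t : ℕ) : Set (ℕ → ℝ) :=
  {f | IsCountedVisit a f t ∧ Nat.count (IsCountedVisit a f) t = m}

def climbSet (a δ : ℝ) (t N : ℕ) : Set (ℕ → ℝ) :=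
  {f | ∀ i ≤ N, a + i * δ ≤ f (t + i)}

section PathEvents

open Set

variable {a δ : ℝ} {m t N : ℕ}

lemma measurableSet_isCountedVisit (a : ℝ) (k : ℕ) :
    MeasurableSet {f : ℕ → ℝ | IsCountedVisit a f k} := by
  simp only [IsCountedVisit, ofPred_and, ofPred_forall]
  measurability

lemma measurable_count_isCountedVisit (a : ℝ) (t : ℕ) :
    Measurable fun f : ℕ → ℝ => Nat.count (IsCountedVisit a f) t := by
  simp only [Nat.count_eq_card_filter_range, Finset.card_filter]
  exact Finset.measurable_sum _ fun k _ =>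
    Measurable.ite (measurableSet_isCountedVisit a k) measurable_const measurable_const

lemma measurableSet_visitAt (a : ℝ) (m t : ℕ) : MeasurableSet (visitAt a m t) :=
  (measurableSet_isCountedVisit a t).inter
    (measurable_count_isCountedVisit a t (measurableSet_singleton m))

lemma measurableSet_climbSet (a δ : ℝ) (t N : ℕ) : MeasurableSet (climbSet a δ t N) := by
  simp only [climbSet, ofPred_forall]
  measurability

lemma isCountedVisit_congr {f g : ℕ → ℝ} {k : ℕ} (h : ∀ i ≤ k, f i = g i) :
    IsCountedVisit a f k ↔ IsCountedVisit a g k := by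
  unfold IsCountedVisit
  constructor <;> rintro ⟨hlt, hk⟩
  · exact ⟨fun l h1 hl => h l hl ▸ hlt l h1 hl, h k le_rfl ▸ hk⟩
  · exact ⟨fun l h1 hl => (h l hl).symm ▸ hlt l h1 hl, (h k le_rfl).symm ▸ hk⟩

lemma dependsOn_mem_visitAt (a : ℝ) (m t : ℕ) :
    DependsOn (· ∈ visitAt a m t) (Iic t) := by
  intro f g h
  have hcongr : ∀ k ≤ t, IsCountedVisit a f k ↔ IsCountedVisit a g k :=
    fun k hk => isCountedVisit_congr fun i hi => h i (hi.trans hk)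
  have hcount : Nat.count (IsCountedVisit a f) t = Nat.count (IsCountedVisit a g) t := by
    simp only [Nat.count_eq_card_filter_range]
    exact congrArg _ (Finset.filter_congr fun k hk =>
      hcongr k (Finset.mem_range.mp hk).le)
  simp only [visitAt, mem_ofPred_eq, hcongr t le_rfl, hcount]

lemma dependsOn_mem_climbSet (a δ : ℝ) (t N : ℕ) :
    DependsOn (· ∈ climbSet a δ t N) (Iic (t + N)) := by
  intro f g h
  simp only [climbSet, mem_ofPred_eq]
  exact propext <| forall₂_congr fun i hi => by rw [h (t + i) (by simpa using hi)]

lemma le_of_mem_visitAt {f : ℕ → ℝ} (hf : f ∈ visitAt a m t) : a ≤ f t :=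
  hf.1.2.1

lemma climbSet_zero (a δ : ℝ) (t : ℕ) : climbSet a δ t 0 = {f | a ≤ f t} := by
  simp [climbSet]

lemma climbSet_succ (a δ : ℝ) (t N : ℕ) :
    climbSet a δ t (N + 1) = climbSet a δ t N ∩ {f | a + N * δ + δ ≤ f (t + N + 1)} := by
  ext f
  simp only [climbSet, mem_ofPred_eq, mem_inter_iff]
  have hlast : a + ((N + 1 : ℕ) : ℝ) * δ = a + N * δ + δ := by push_cast; ring
  constructor
  · intro h
    exact ⟨fun i hi => h i (by omega), hlast ▸ h (N + 1) le_rfl⟩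
  · rintro ⟨h, hN⟩ i hi
    rcases Nat.lt_or_eq_of_le hi with hi | rfl
    · exact h i (by omega)
    · exact hlast ▸ hN

lemma le_of_mem_climbSet {f : ℕ → ℝ} (hf : f ∈ climbSet a δ t N) : a + N * δ ≤ f (t + N) :=
  hf N le_rfl

lemma pairwise_disjoint_visitAt (a : ℝ) (m : ℕ) :
    Pairwise (Function.onFun Disjoint (visitAt a m)) :=
  fun _ _ hne => disjoint_left.mpr fun _ h h' =>
    hne (Nat.count_injective h.1 h'.1 (h.2.trans h'.2.symm))

lemma natCast_add_one_le_tsum_iff_exists_visitAt {f : ℕ → ℝ} :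
    ((m + 1 : ℕ) : ℝ≥0∞) ≤ ∑' k, (if IsCountedVisit a f k then 1 else 0 : ℝ≥0∞) ↔
      ∃ t, f ∈ visitAt a m t :=
  Nat.natCast_add_one_le_tsum_ite_iff

lemma tsum_le_of_mem_visitAt_of_mem_climbSet {f : ℕ → ℝ} (hNδ : 2 ≤ N * δ)
    (hv : f ∈ visitAt a m t) (hc : f ∈ climbSet a δ t N) :
    ∑' k, (if IsCountedVisit a f k then 1 else 0 : ℝ≥0∞) ≤ m + N := by
  have hN : 1 ≤ N := by
    rcases N with _ | N
    · norm_num at hNδ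
    · omega
  have hnone : ∀ k ≥ t + N, ¬ IsCountedVisit a f k := fun k hk hvk => by
    have := hvk.1 (t + N) (by omega) hk
    linarith [le_of_mem_climbSet hc]
  rw [Nat.tsum_ite_eq_count_of_forall_ge hnone]
  have hcount : Nat.count (IsCountedVisit a f) (t + 1 + (N - 1)) ≤ m + 1 + (N - 1) := by
    rw [Nat.count_add, Nat.count_succ, if_pos hv.1, hv.2]
    exact Nat.add_le_add_left (Nat.count_le _) _
  rw [show t + 1 + (N - 1) = t + N by omega, show m + 1 + (N - 1) = m + N by omega] at hcount
  exact_mod_cast hcount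

end PathEvents

namespace CondWalk

variable {Ω Ω₀ : Type*} [MeasurableSpace Ω] [MeasurableSpace Ω₀] (cw : CondWalk Ω Ω₀)

def path (ω : Ω) : ℕ → ℝ := fun k => cw.Sp k ω

lemma measurable_path : Measurable cw.path := measurable_pi_lambda _ cw.meas_Sp

lemma localTimeL_eq_tsum (j : ℕ) (ω : Ω) :
    localTimeL cw j ω = ∑' k, if IsCountedVisit j (cw.path ω) k then 1 else 0 :=
  tsum_congr fun _ => if_congr Iff.rfl rfl rfl

/-- `∫ G dP(x, ·)` for the Doob `h`-transform transition kernel `P` of the conditioned walk. -/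
noncomputable def transitionLIntegral (x : ℝ) (G : ℝ → ℝ≥0∞) : ℝ≥0∞ :=
  (ENNReal.ofReal (renewalR cw.P₀ cw.ξ x))⁻¹ *
    ∫⁻ z, ENNReal.ofReal (renewalR cw.P₀ cw.ξ (x + z)) *
      (if 0 ≤ x + z then G (x + z) else 0) ∂cw.μ

lemma transitionLIntegral_one {x : ℝ} (hx : 0 ≤ x) : cw.transitionLIntegral x 1 = 1 := by
  have := cw.prob_Pf x hx
  calc cw.transitionLIntegral x 1
      = ∫⁻ ω, 1 * cw.transitionLIntegral (cw.Sp 0 ω) 1 ∂cw.Pf x := by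
        rw [lintegral_congr_ae ((cw.start x hx).mono fun ω hω => by rw [hω]),
          lintegral_const, measure_univ, mul_one, one_mul]
    _ = ∫⁻ ω, 1 * 1 ∂cw.Pf x :=
        (cw.markov_doob x hx 0 1 measurable_const (fun _ _ _ => rfl) 1 measurable_const).symm
    _ = 1 := by simp

lemma renewalR_pos {x : ℝ} (hx : 0 ≤ x) : 0 < renewalR cw.P₀ cw.ξ x := by
  by_contra! h
  have hone := cw.transitionLIntegral_one hx
  rw [transitionLIntegral, ENNReal.ofReal_eq_zero.mpr h, ENNReal.inv_zero] at hone
  set I := ∫⁻ z, ENNReal.ofReal (renewalR cw.P₀ cw.ξ (x + z)) *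
    (if 0 ≤ x + z then (1 : ℝ → ℝ≥0∞) (x + z) else 0) ∂cw.μ
  rcases eq_or_ne I 0 with hI | hI
  · simp [hI] at hone
  · simp [ENNReal.top_mul hI] at hone

lemma renewalR_mono {x y : ℝ} (hx : 0 ≤ x) (hxy : x ≤ y) :
    renewalR cw.P₀ cw.ξ x ≤ renewalR cw.P₀ cw.ξ y :=
  renewalR_le_renewalR hxy (cw.renewalR_pos (hx.trans hxy))

lemma not_ae_eq_zero : ¬ ∀ᵐ z ∂cw.μ, z = 0 := by
  intro h
  have := cw.prob_μ
  refine cw.nonarithmetic ⟨1, one_pos, ?_⟩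
  rw [← measure_univ (μ := cw.μ)]
  exact measure_congr <| ae_eq_univ.mpr <| ae_iff.mp <| h.mono fun z hz => ⟨0, by simp [hz]⟩

lemma exists_pos_measure_Ici_ne_zero : ∃ δ > 0, cw.μ (Set.Ici δ) ≠ 0 :=
  exists_pos_measure_Ici_ne_zero_of_integral_eq_zero cw.integrable_id cw.centered
    cw.not_ae_eq_zero

lemma measure_Ici_le_transitionLIntegral {x δ c : ℝ} (hx : 0 ≤ x) (hδ : 0 ≤ δ)
    (hc : c ≤ x + δ) :
    cw.μ (Set.Ici δ) ≤ cw.transitionLIntegral x ((Set.Ici c).indicator 1) := by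
  have hR := cw.renewalR_pos hx
  rw [transitionLIntegral, ← ENNReal.div_eq_inv_mul, ENNReal.le_div_iff_mul_le
      (Or.inl (ENNReal.ofReal_pos.mpr hR).ne') (Or.inl ENNReal.ofReal_ne_top),
    mul_comm, ← lintegral_indicator_const measurableSet_Ici]
  refine lintegral_mono fun z => ?_
  by_cases hz : δ ≤ z
  · rw [Set.indicator_of_mem (Set.mem_Ici.mpr hz), if_pos (by linarith),
      Set.indicator_of_mem (Set.mem_Ici.mpr (by linarith)), Pi.one_apply, mul_one]
    exact ENNReal.ofReal_le_ofReal (cw.renewalR_mono hx (by linarith))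
  · rw [Set.indicator_of_notMem (by simpa using hz)]
    exact zero_le

lemma lintegral_indicator_one_path {x : ℝ} {S : Set (ℕ → ℝ)} (hS : MeasurableSet S) :
    ∫⁻ ω, S.indicator 1 (cw.path ω) ∂cw.Pf x = cw.Pf x (cw.path ⁻¹' S) :=
  lintegral_indicator_one (cw.measurable_path hS)

lemma measure_Ici_mul_le_measure_inter_step {x δ b : ℝ} {n : ℕ} {B : Set (ℕ → ℝ)}
    (hx : 0 ≤ x) (hδ : 0 ≤ δ) (hb : 0 ≤ b) (hBm : MeasurableSet B)
    (hBdep : DependsOn (· ∈ B) (Set.Iic n)) (hBb : ∀ f ∈ B, b ≤ f n) :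
    cw.μ (Set.Ici δ) * cw.Pf x (cw.path ⁻¹' B)
      ≤ cw.Pf x (cw.path ⁻¹' (B ∩ {f | b + δ ≤ f (n + 1)})) := by
  have := cw.prob_μ
  have hBind : Measurable (B.indicator (1 : (ℕ → ℝ) → ℝ≥0∞)) := measurable_one.indicator hBm
  have hmarkov := cw.markov_doob x hx n (B.indicator 1) hBind
    (fun f g h => by simp only [Set.indicator_apply, Pi.one_apply, hBdep fun i hi => h i hi])
    ((Set.Ici (b + δ)).indicator 1) (measurable_one.indicator measurableSet_Ici)
  calc cw.μ (Set.Ici δ) * cw.Pf x (cw.path ⁻¹' B)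
      = ∫⁻ ω, B.indicator 1 (cw.path ω) * cw.μ (Set.Ici δ) ∂cw.Pf x := by
        rw [lintegral_mul_const' _ _ (measure_ne_top _ _),
          cw.lintegral_indicator_one_path hBm, mul_comm]
    _ ≤ ∫⁻ ω, B.indicator 1 (cw.path ω) *
          cw.transitionLIntegral (cw.Sp n ω) ((Set.Ici (b + δ)).indicator 1) ∂cw.Pf x := by
        refine lintegral_mono fun ω => ?_
        by_cases hω : cw.path ω ∈ B
        · have hbn : b ≤ cw.Sp n ω := hBb _ hω
          simp only [Set.indicator_of_mem hω, Pi.one_apply, one_mul]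
          exact cw.measure_Ici_le_transitionLIntegral (hb.trans hbn) hδ (by linarith)
        · simp [Set.indicator_of_notMem hω]
    _ = ∫⁻ ω, B.indicator 1 (cw.path ω) *
          (Set.Ici (b + δ)).indicator 1 (cw.Sp (n + 1) ω) ∂cw.Pf x := hmarkov.symm
    _ = cw.Pf x (cw.path ⁻¹' (B ∩ {f | b + δ ≤ f (n + 1)})) := by
        have hstep : MeasurableSet {f : ℕ → ℝ | b + δ ≤ f (n + 1)} :=
          measurable_pi_apply _ measurableSet_Ici
        rw [← cw.lintegral_indicator_one_path (hBm.inter hstep),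
          Set.inter_indicator_one]
        rfl

lemma measure_Ici_pow_mul_le_measure_inter_climbSet {x a δ : ℝ} {t : ℕ} {A : Set (ℕ → ℝ)}
    (hx : 0 ≤ x) (ha : 0 ≤ a) (hδ : 0 ≤ δ) (hAm : MeasurableSet A)
    (hAdep : DependsOn (· ∈ A) (Set.Iic t)) (hAa : ∀ f ∈ A, a ≤ f t) (N : ℕ) :
    cw.μ (Set.Ici δ) ^ N * cw.Pf x (cw.path ⁻¹' A)
      ≤ cw.Pf x (cw.path ⁻¹' (A ∩ climbSet a δ t N)) := by
  induction N with
  | zero =>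
    rw [pow_zero, one_mul, climbSet_zero, Set.inter_eq_left.mpr (show A ⊆ {f | a ≤ f t} from hAa)]
  | succ N ih =>
    have hdep : DependsOn (· ∈ A ∩ climbSet a δ t N) (Set.Iic (t + N)) := fun f g h => by
      have hA : (f ∈ A) = (g ∈ A) :=
        hAdep fun i hi => h i (Set.Iic_subset_Iic.mpr (Nat.le_add_right t N) hi)
      have hC : (f ∈ climbSet a δ t N) = (g ∈ climbSet a δ t N) :=
        dependsOn_mem_climbSet a δ t N h
      simp only [Set.mem_inter_iff, hA, hC]
    calc cw.μ (Set.Ici δ) ^ (N + 1) * cw.Pf x (cw.path ⁻¹' A)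
        = cw.μ (Set.Ici δ) * (cw.μ (Set.Ici δ) ^ N * cw.Pf x (cw.path ⁻¹' A)) := by
          rw [pow_succ', mul_assoc]
      _ ≤ cw.μ (Set.Ici δ) * cw.Pf x (cw.path ⁻¹' (A ∩ climbSet a δ t N)) := by gcongr
      _ ≤ cw.Pf x (cw.path ⁻¹' ((A ∩ climbSet a δ t N) ∩
            {f | a + N * δ + δ ≤ f (t + N + 1)})) :=
          cw.measure_Ici_mul_le_measure_inter_step hx hδ (by positivity)
            (hAm.inter (measurableSet_climbSet a δ t N)) hdep
            fun _ hf => le_of_mem_climbSet hf.2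
      _ = cw.Pf x (cw.path ⁻¹' (A ∩ climbSet a δ t (N + 1))) := by
          rw [climbSet_succ, Set.inter_assoc]

lemma measure_localTimeL_ge_add_le {y δ : ℝ} {N : ℕ} (hy : 0 ≤ y) (hδ : 0 ≤ δ)
    (hNδ : 2 ≤ N * δ) (j m : ℕ) :
    cw.Pf y {ω | ((m + N + 1 : ℕ) : ℝ≥0∞) ≤ localTimeL cw j ω}
      ≤ (1 - cw.μ (Set.Ici δ) ^ N) *
          cw.Pf y {ω | ((m + 1 : ℕ) : ℝ≥0∞) ≤ localTimeL cw j ω} := by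
  have := cw.prob_Pf y hy
  set D := fun t => cw.path ⁻¹' visitAt j m t
  set E := fun t => cw.path ⁻¹' climbSet j δ t N
  have hD : ∀ t, MeasurableSet (D t) := fun _ => cw.measurable_path (measurableSet_visitAt ..)
  have hE : ∀ t, MeasurableSet (E t) := fun _ => cw.measurable_path (measurableSet_climbSet ..)
  have hunion : {ω | ((m + 1 : ℕ) : ℝ≥0∞) ≤ localTimeL cw j ω} = ⋃ t, D t := by
    ext ω
    simp only [Set.mem_ofPred_eq, Set.mem_iUnion, localTimeL_eq_tsum]
    exact natCast_add_one_le_tsum_iff_exists_visitAt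
  have hsub : {ω | ((m + N + 1 : ℕ) : ℝ≥0∞) ≤ localTimeL cw j ω} ⊆ ⋃ t, D t \ E t := by
    intro ω hω
    have hω' : ((m + 1 : ℕ) : ℝ≥0∞) ≤ localTimeL cw j ω :=
      le_trans (by gcongr; omega) hω
    obtain ⟨t, ht⟩ := Set.mem_iUnion.mp (hunion ▸ hω' : ω ∈ ⋃ t, D t)
    refine Set.mem_iUnion.mpr ⟨t, ht, fun hc => ?_⟩
    have hle := tsum_le_of_mem_visitAt_of_mem_climbSet hNδ ht hc
    rw [Set.mem_ofPred_eq, localTimeL_eq_tsum] at hω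
    exact absurd (hω.trans hle) (by norm_cast; omega)
  have hclimb : ∀ t, cw.Pf y (D t \ E t) ≤ (1 - cw.μ (Set.Ici δ) ^ N) * cw.Pf y (D t) := by
    intro t
    have hinter := cw.measure_Ici_pow_mul_le_measure_inter_climbSet hy (Nat.cast_nonneg j) hδ
      (measurableSet_visitAt j m t) (dependsOn_mem_visitAt j m t) (fun _ => le_of_mem_visitAt)
      N
    rw [ENNReal.eq_sub_of_add_eq (measure_ne_top _ _) (measure_sdiff_add_inter _ (hE t)),
      ENNReal.sub_mul fun _ _ => measure_ne_top _ _, one_mul]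
    exact tsub_le_tsub_left hinter _
  calc cw.Pf y {ω | ((m + N + 1 : ℕ) : ℝ≥0∞) ≤ localTimeL cw j ω}
      ≤ ∑' t, cw.Pf y (D t \ E t) := (measure_mono hsub).trans (measure_iUnion_le _)
    _ ≤ ∑' t, (1 - cw.μ (Set.Ici δ) ^ N) * cw.Pf y (D t) := ENNReal.tsum_le_tsum hclimb
    _ = _ := by
        rw [ENNReal.tsum_mul_left, hunion,
          measure_iUnion (fun s t hst => (pairwise_disjoint_visitAt j m hst).preimage _) hD]

end CondWalk

/-- For `j ≥ 0`, let `L(j)` denote the number of visits of the conditioned walk `(S⁺_n)` to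
the interval `[j, j+1)` before its first entry into `[j+2, ∞)`, when started from a point of
`[j, j+1)`. Then `L(j)` is stochastically dominated by a geometric random variable whose
success probability is bounded below uniformly in `j`: there exist constants `C₃, c₃ > 0`
independent of `j` such that `sup_{y ∈ [j, j+1)} 𝐏_y(L(j) ≥ m) ≤ C₃ e^{-c₃ m}` for all
`m ≥ 1`. -/
theorem conditioned_walk_local_time_geometric
    {Ω Ω₀ : Type*} [MeasurableSpace Ω] [MeasurableSpace Ω₀] (cw : CondWalk Ω Ω₀) :
    ∃ C₃ > (0 : ℝ), ∃ c₃ > (0 : ℝ), ∀ j : ℕ, ∀ m : ℕ, 1 ≤ m →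
      ∀ y ∈ Set.Ico (j : ℝ) ((j : ℝ) + 1),
        cw.Pf y {ω | (m : ℝ≥0∞) ≤ localTimeL cw j ω}
          ≤ ENNReal.ofReal (C₃ * exp (-c₃ * (m : ℝ))) := by
  obtain ⟨δ, hδ, hμδ⟩ := cw.exists_pos_measure_Ici_ne_zero
  obtain ⟨N, hN⟩ := exists_nat_ge (2 / δ)
  have hNδ : 2 ≤ N * δ := (div_le_iff₀ hδ).mp hN
  have hNpos : 0 < N := Nat.cast_pos.mp ((div_pos two_pos hδ).trans_le hN)
  have hr : 1 - cw.μ (Set.Ici δ) ^ N < 1 :=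
    ENNReal.sub_lt_self ENNReal.one_ne_top one_ne_zero (pow_ne_zero _ hμδ)
  obtain ⟨C, hC, c, hc, htail⟩ := exists_geometric_tail_bound hr hNpos
  refine ⟨C, hC, c, hc, fun j m hm y hy => ?_⟩
  have hy0 : 0 ≤ y := (Nat.cast_nonneg j).trans hy.1
  have := cw.prob_Pf y hy0
  obtain ⟨k, rfl⟩ : ∃ k, m = k + 1 := ⟨m - 1, by omega⟩
  have hanti :
      Antitone fun k : ℕ => cw.Pf y {ω | ((k + 1 : ℕ) : ℝ≥0∞) ≤ localTimeL cw j ω} :=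
    fun a b hab => measure_mono fun ω hω => by
      simp only [Set.mem_ofPred_eq] at hω ⊢
      exact le_trans (Nat.cast_le.mpr (by omega)) hω
  have hk := htail _ hanti prob_le_one (fun m => by
    simpa only [add_right_comm] using cw.measure_localTimeL_ge_add_le hy0 hδ.le hNδ j m) k
  simpa using hk
end

section
/- Let ((X_k, Q_k))_{k≥1} be i.i.d. pairs of real random variables with Q_1 ≥ 0 almost surely, E[X_1] > 0, E[e^{θ |X_1|}] < ∞ for some θ > 0, and E[e^{δ Q_1}] < ∞ for some δ > 0. For x ≥ 0, set S_0 := x and S_n := x + X_1 + ⋯ + X_n for n ≥ 1. Then there exists ε > 0 such that sup_{x ≥ 0} E[exp(ε ∑_{k=0}^∞ e^{−S_k} 1{S_k ≥ 0} Q_{k+1})] ≤ 2. -/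
open MeasureTheory Filter Real
open scoped ENNReal

attribute [local instance] Classical.propDecidable

/-!
Fix `β > 0` and write `Wₖ = X₀ + ⋯ + X_{k-1}`. For `x ≥ 0` the `k`-th term of the series is at
most `e^{-βk} Q⁺ₖ` if `Wₖ ≥ βk` and at most `Q⁺ₖ` otherwise, a bound free of `x`. Since the mgf
of `X₀` has slope `E X₀ > 0` at `0`, a Chernoff bound gives `P(Wₙ < βn) ≤ rⁿ` with `r < 1`.
The geometrically damped part has a finite exponential moment by independence of the `Qₖ`.
For the rest, looking at the last `n` with `Wₙ < βn` gives
`exp (s ∑_{Wₖ < βk} Q⁺ₖ) ≤ 1 + ∑ₙ 1{Wₙ < βn} exp (s (Q⁺₀ + ⋯ + Q⁺ₙ))`, and `a ≤ c⁻¹ + c a²`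
with `c = r^{n/2}` separates the indicator from the exponential, leaving a convergent geometric
series once `s` is small. A uniform bound `K` on the exponential moment at `s` becomes the bound
`2` at `ε = s / (K + 1)` by convexity: `e^{λz} ≤ 1 + λ e^z` for `λ ∈ [0, 1]`.
-/

open Finset ProbabilityTheory Topology

lemma exp_mul_le_one_add_mul_exp {t : ℝ} (ht₀ : 0 ≤ t) (ht₁ : t ≤ 1) (a : ℝ) :
    exp (t * a) ≤ 1 + t * exp a := by
  have := convexOn_exp.2 (Set.mem_univ a) (Set.mem_univ 0) ht₀ (sub_nonneg.2 ht₁) (by ring)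
  simp only [smul_eq_mul, mul_zero, add_zero, exp_zero, mul_one] at this
  linarith

lemma exp_add_le_exp_two_mul_add_exp_two_mul (a b : ℝ) :
    exp (a + b) ≤ exp (2 * a) + exp (2 * b) := by
  rcases le_total a b with h | h
  · linarith [exp_le_exp.2 (show a + b ≤ 2 * b by linarith), exp_pos (2 * a)]
  · linarith [exp_le_exp.2 (show a + b ≤ 2 * a by linarith), exp_pos (2 * b)]

lemma ENNReal.le_inv_add_mul_sq (c a : ℝ≥0∞) : a ≤ c⁻¹ + c * a ^ 2 := by
  rcases le_total (a * c) 1 with h | h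
  · exact (ENNReal.le_inv_iff_mul_le.2 h).trans le_self_add
  · calc a = a * 1 := (mul_one a).symm
      _ ≤ a * (a * c) := by gcongr
      _ = c * a ^ 2 := by ring
      _ ≤ _ := le_add_self

lemma ENNReal.sum_range_pow_le_inv_one_sub (a : ℝ≥0∞) (N : ℕ) :
    ∑ n ∈ range N, a ^ n ≤ (1 - a)⁻¹ :=
  (ENNReal.sum_le_tsum _).trans_eq (ENNReal.tsum_geometric a)

lemma exp_mul_sum_indicator_le {V : ℕ → ℝ} (hV : ∀ k, 0 ≤ V k) (S : Set ℕ) {s : ℝ}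
    (hs : 0 ≤ s) (N : ℕ) :
    exp (s * ∑ k ∈ range N, S.indicator V k) ≤
      1 + ∑ n ∈ range N, S.indicator (fun n => exp (s * ∑ k ∈ range (n + 1), V k)) n := by
  induction N with
  | zero => simp
  | succ N ih =>
    by_cases hN : N ∈ S
    · have hle : ∑ k ∈ range (N + 1), S.indicator V k ≤ ∑ k ∈ range (N + 1), V k :=
        sum_le_sum fun k _ => Set.indicator_le_self' (fun k _ => hV k) k
      calc exp (s * ∑ k ∈ range (N + 1), S.indicator V k)
          ≤ S.indicator (fun n => exp (s * ∑ k ∈ range (n + 1), V k)) N := by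
            rw [Set.indicator_of_mem hN]; gcongr
        _ ≤ ∑ n ∈ range (N + 1), S.indicator (fun n => exp (s * ∑ k ∈ range (n + 1), V k)) n :=
            single_le_sum (f := fun n =>
                S.indicator (fun n => exp (s * ∑ k ∈ range (n + 1), V k)) n)
              (fun n _ => Set.indicator_nonneg (fun _ _ => (exp_pos _).le) n)
              (self_mem_range_succ N)
        _ ≤ _ := le_add_of_nonneg_left zero_le_one
    · rw [sum_range_succ, sum_range_succ, Set.indicator_of_notMem hN,
        Set.indicator_of_notMem hN]
      simpa using ih

lemma expE_ofReal {r : ℝ} (hr : 0 ≤ r) : expE (ENNReal.ofReal r) = ENNReal.ofReal (exp r) := by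
  simp [expE, ENNReal.toReal_ofReal hr]

lemma monotone_expE : Monotone expE := by
  intro a b hab
  rcases eq_or_ne b ⊤ with rfl | hb
  · simp [expE]
  have ha : a ≠ ⊤ := ne_top_of_le_ne_top hb hab
  simp only [expE, if_neg ha, if_neg hb]
  exact ENNReal.ofReal_le_ofReal (exp_le_exp.2 (ENNReal.toReal_mono hb hab))

lemma le_expE (a : ℝ≥0∞) : a ≤ expE a := by
  rcases eq_or_ne a ⊤ with rfl | ha
  · simp [expE]
  rw [expE, if_neg ha]
  calc a = ENNReal.ofReal a.toReal := (ENNReal.ofReal_toReal ha).symm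
    _ ≤ _ := ENNReal.ofReal_le_ofReal ((le_add_of_nonneg_right zero_le_one).trans
      (add_one_le_exp _))

lemma continuous_expE : Continuous expE := by
  refine continuous_iff_continuousAt.2 fun a => ?_
  rcases eq_or_ne a ⊤ with rfl | ha
  · simpa [ContinuousAt, expE] using tendsto_nhds_top_mono tendsto_id
      (Eventually.of_forall le_expE)
  · have : ∀ᶠ b in 𝓝 a, expE b = ENNReal.ofReal (exp b.toReal) :=
      (eventually_ne_nhds ha).mono fun b hb => if_neg hb
    rw [ContinuousAt, tendsto_congr' this, expE, if_neg ha]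
    exact (ENNReal.continuous_ofReal.comp continuous_exp).continuousAt.comp
      (ENNReal.continuousAt_toReal ha)

lemma expE_mul_sum_ite_le {Ω : Type*} (X Q : ℕ → Ω → ℝ) {x ε : ℝ} (hx : 0 ≤ x) (hε : 0 ≤ ε)
    (β : ℝ) (N : ℕ) (ω : Ω) :
    expE (ENNReal.ofReal ε * ∑ k ∈ range N, (if 0 ≤ x + ∑ i ∈ range k, X i ω then
        ENNReal.ofReal (exp (-(x + ∑ i ∈ range k, X i ω)) * Q k ω) else 0)) ≤
      ENNReal.ofReal (exp (ε * ∑ k ∈ range N, (exp (-β) ^ k * max (Q k ω) 0 +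
        {ω | ∑ i ∈ range k, X i ω < β * k}.indicator (fun ω => max (Q k ω) 0) ω))) := by
  have hterm : ∀ k, 0 ≤ exp (-β) ^ k * max (Q k ω) 0 +
      {ω | ∑ i ∈ range k, X i ω < β * k}.indicator (fun ω => max (Q k ω) 0) ω := fun k =>
    add_nonneg (by positivity) (Set.indicator_nonneg (fun _ _ => le_max_right _ _) _)
  rw [← expE_ofReal (mul_nonneg hε (sum_nonneg fun k _ => hterm k)), ENNReal.ofReal_mul hε,
    ENNReal.ofReal_sum_of_nonneg fun k _ => hterm k]
  refine monotone_expE (mul_le_mul_right (sum_le_sum fun k _ => ?_) _)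
  split_ifs with hS
  swap; · exact zero_le
  set W := ∑ i ∈ range k, X i ω
  have hQ : exp (-(x + W)) * Q k ω ≤ exp (-(x + W)) * max (Q k ω) 0 :=
    mul_le_mul_of_nonneg_left (le_max_left _ _) (exp_pos _).le
  refine ENNReal.ofReal_le_ofReal (hQ.trans ?_)
  rw [← exp_nat_mul]
  by_cases hW : W < β * k
  · rw [Set.indicator_of_mem (by exact hW)]
    have : exp (-(x + W)) ≤ 1 := exp_le_one_iff.2 (by linarith)
    nlinarith [le_max_right (Q k ω) 0, exp_pos (k * -β)]
  · rw [Set.indicator_of_notMem (by exact hW), add_zero]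
    gcongr
    linarith [not_lt.1 hW]

section

variable {Ω : Type*} [MeasurableSpace Ω] {μ : Measure Ω}

lemma lintegral_expE_tsum_le {f : ℕ → Ω → ℝ≥0∞} (hf : ∀ k, Measurable (f k)) {K : ℝ≥0∞}
    (h : ∀ N, ∫⁻ ω, expE (∑ k ∈ range N, f k ω) ∂μ ≤ K) :
    ∫⁻ ω, expE (∑' k, f k ω) ∂μ ≤ K := by
  have hmono : Monotone fun N ω => expE (∑ k ∈ range N, f k ω) := fun M N hMN ω =>
    monotone_expE (sum_le_sum_of_subset (range_subset_range.2 hMN))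
  simp_rw [ENNReal.tsum_eq_iSup_nat,
    monotone_expE.map_ciSup_of_continuousAt continuous_expE.continuousAt]
  rw [lintegral_iSup (f := fun N ω => expE (∑ k ∈ range N, f k ω))
    (fun N => continuous_expE.measurable.comp (measurable_sum _ fun k _ => hf k)) hmono]
  exact iSup_le h

lemma lintegral_expE_mul_tsum_ite_le {X Q : ℕ → Ω → ℝ} (hXm : ∀ k, Measurable (X k))
    (hQm : ∀ k, Measurable (Q k)) {x ε : ℝ} (hx : 0 ≤ x) (hε : 0 ≤ ε) (β : ℝ) {K : ℝ≥0∞}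
    (h : ∀ N, ∫⁻ ω, ENNReal.ofReal (exp (ε * ∑ k ∈ range N, (exp (-β) ^ k * max (Q k ω) 0 +
      {ω | ∑ i ∈ range k, X i ω < β * k}.indicator (fun ω => max (Q k ω) 0) ω))) ∂μ ≤ K) :
    ∫⁻ ω, expE (ENNReal.ofReal ε * ∑' k, (if 0 ≤ x + ∑ i ∈ range k, X i ω then
        ENNReal.ofReal (exp (-(x + ∑ i ∈ range k, X i ω)) * Q k ω) else 0)) ∂μ ≤ K := by
  simp_rw [← ENNReal.tsum_mul_left]
  refine lintegral_expE_tsum_le (fun k => ?_) fun N => (lintegral_mono fun ω => ?_).trans (h N)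
  · exact (Measurable.ite (measurableSet_le measurable_const (by fun_prop)) (by fun_prop)
      measurable_const).const_mul _
  rw [← mul_sum]
  exact expE_mul_sum_ite_le X Q hx hε β N ω

lemma lintegral_exp_mul_add_le {f g : Ω → ℝ} (hf : Measurable f) (s : ℝ) :
    ∫⁻ ω, ENNReal.ofReal (exp (s * (f ω + g ω))) ∂μ ≤
      ∫⁻ ω, ENNReal.ofReal (exp (2 * s * f ω)) ∂μ +
        ∫⁻ ω, ENNReal.ofReal (exp (2 * s * g ω)) ∂μ := by
  rw [← lintegral_add_left (by fun_prop)]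
  refine lintegral_mono fun ω => ?_
  rw [← ENNReal.ofReal_add (exp_pos _).le (exp_pos _).le, mul_add, mul_assoc, mul_assoc]
  exact ENNReal.ofReal_le_ofReal (exp_add_le_exp_two_mul_add_exp_two_mul _ _)

lemma exists_lintegral_exp_mul_le_two {ι : Type*} [IsProbabilityMeasure μ] {Z : ι → Ω → ℝ}
    {s : ℝ} (hs : 0 < s) {K : ℝ≥0∞} (hK : K ≠ ⊤)
    (h : ∀ i, ∫⁻ ω, ENNReal.ofReal (exp (s * Z i ω)) ∂μ ≤ K) :
    ∃ ε > 0, ∀ i, ∫⁻ ω, ENNReal.ofReal (exp (ε * Z i ω)) ∂μ ≤ 2 := by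
  set c := (K.toReal + 1)⁻¹
  have hc₀ : 0 < c := inv_pos.2 (by positivity)
  have hc₁ : c ≤ 1 := inv_le_one_of_one_le₀ (by linarith [K.toReal_nonneg])
  have hcK : ENNReal.ofReal c * K ≤ 1 := by
    rw [← ENNReal.ofReal_toReal hK, ← ENNReal.ofReal_mul hc₀.le, ← ENNReal.ofReal_one]
    refine ENNReal.ofReal_le_ofReal ?_
    rw [inv_mul_le_iff₀ (by positivity)]
    linarith
  refine ⟨c * s, by positivity, fun i => ?_⟩
  calc ∫⁻ ω, ENNReal.ofReal (exp (c * s * Z i ω)) ∂μ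
      ≤ ∫⁻ ω, (1 + ENNReal.ofReal c * ENNReal.ofReal (exp (s * Z i ω))) ∂μ := by
        refine lintegral_mono fun ω => ?_
        rw [← ENNReal.ofReal_one, ← ENNReal.ofReal_mul hc₀.le,
          ← ENNReal.ofReal_add zero_le_one (mul_nonneg hc₀.le (exp_pos _).le), mul_assoc]
        exact ENNReal.ofReal_le_ofReal (exp_mul_le_one_add_mul_exp hc₀.le hc₁ _)
    _ = 1 + ENNReal.ofReal c * ∫⁻ ω, ENNReal.ofReal (exp (s * Z i ω)) ∂μ := by
        rw [lintegral_add_left measurable_const, lintegral_const, measure_univ, one_mul,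
          lintegral_const_mul' _ _ ENNReal.ofReal_ne_top]
    _ ≤ 1 + 1 := by
        gcongr
        exact (mul_le_mul_right (h i) _).trans hcK
    _ = 2 := one_add_one_eq_two

lemma lintegral_exp_mul_max_zero_ne_top [IsFiniteMeasure μ] {Y : Ω → ℝ} {δ : ℝ}
    (h : ∫⁻ ω, ENNReal.ofReal (exp (δ * Y ω)) ∂μ < ⊤) :
    ∫⁻ ω, ENNReal.ofReal (exp (δ * max (Y ω) 0)) ∂μ ≠ ⊤ := by
  refine ne_top_of_le_ne_top (b := ∫⁻ ω, (ENNReal.ofReal (exp (δ * Y ω)) + 1) ∂μ) ?_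
    (lintegral_mono fun ω => ?_)
  · rw [lintegral_add_right _ measurable_const]
    exact ENNReal.add_ne_top.2 ⟨h.ne, by simp⟩
  · rw [← ENNReal.ofReal_one, ← ENNReal.ofReal_add (exp_pos _).le zero_le_one]
    refine ENNReal.ofReal_le_ofReal ?_
    rcases le_total (Y ω) 0 with hY | hY
    · rw [max_eq_right hY, mul_zero, exp_zero]; linarith [exp_pos (δ * Y ω)]
    · rw [max_eq_left hY]; linarith

lemma setLIntegral_le_inv_mul_measure_add_mul_lintegral_sq {f : Ω → ℝ≥0∞} (hf : Measurable f)
    (c : ℝ≥0∞) (E : Set Ω) :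
    ∫⁻ ω in E, f ω ∂μ ≤ c⁻¹ * μ E + c * ∫⁻ ω, f ω ^ 2 ∂μ :=
  calc ∫⁻ ω in E, f ω ∂μ ≤ ∫⁻ ω in E, (c⁻¹ + c * f ω ^ 2) ∂μ :=
        lintegral_mono fun ω => ENNReal.le_inv_add_mul_sq c (f ω)
    _ = c⁻¹ * μ E + c * ∫⁻ ω in E, f ω ^ 2 ∂μ := by
        rw [lintegral_add_left measurable_const, setLIntegral_const,
          lintegral_const_mul _ (hf.pow_const 2)]
    _ ≤ _ := by gcongr; exact Measure.restrict_le_self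

lemma lintegral_exp_mul_sum_indicator_le [IsProbabilityMeasure μ] {V : ℕ → Ω → ℝ}
    (hV : ∀ k ω, 0 ≤ V k ω) (hVm : ∀ k, Measurable (V k)) {E : ℕ → Set Ω}
    (hE : ∀ n, MeasurableSet (E n)) {s : ℝ} (hs : 0 ≤ s) (c : ℕ → ℝ≥0∞) (N : ℕ) :
    ∫⁻ ω, ENNReal.ofReal (exp (s * ∑ k ∈ range N, (E k).indicator (V k) ω)) ∂μ ≤
      1 + ∑ n ∈ range N, ((c n)⁻¹ * μ (E n) +
        c n * ∫⁻ ω, ENNReal.ofReal (exp (2 * s * ∑ k ∈ range (n + 1), V k ω)) ∂μ) := by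
  set F : ℕ → Ω → ℝ≥0∞ := fun n ω => ENNReal.ofReal (exp (s * ∑ k ∈ range (n + 1), V k ω))
  have hF : ∀ n, Measurable (F n) := fun n =>
    (measurable_exp.comp ((measurable_sum _ fun k _ => hVm k).const_mul s)).ennreal_ofReal
  have hpt : ∀ ω, ENNReal.ofReal (exp (s * ∑ k ∈ range N, (E k).indicator (V k) ω)) ≤
      1 + ∑ n ∈ range N, (E n).indicator (F n) ω := by
    intro ω
    have := exp_mul_sum_indicator_le (V := fun k => V k ω) (fun k => hV k ω)
      {k | ω ∈ E k} hs N
    refine (ENNReal.ofReal_le_ofReal this).trans (le_of_eq ?_)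
    rw [ENNReal.ofReal_add zero_le_one (sum_nonneg fun n _ =>
        Set.indicator_nonneg (fun _ _ => (exp_pos _).le) n), ENNReal.ofReal_one,
      ENNReal.ofReal_sum_of_nonneg fun n _ =>
        Set.indicator_nonneg (fun _ _ => (exp_pos _).le) n]
    congr 1
    refine sum_congr rfl fun n _ => ?_
    by_cases h : ω ∈ E n <;> simp [h, F]
  have hsq : ∀ n ω, F n ω ^ 2 =
      ENNReal.ofReal (exp (2 * s * ∑ k ∈ range (n + 1), V k ω)) := fun n ω => by
    rw [← ENNReal.ofReal_pow (exp_pos _).le, ← exp_nat_mul]; push_cast; ring_nf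
  calc _ ≤ ∫⁻ ω, (1 + ∑ n ∈ range N, (E n).indicator (F n) ω) ∂μ := lintegral_mono hpt
    _ = 1 + ∑ n ∈ range N, ∫⁻ ω in E n, F n ω ∂μ := by
        rw [lintegral_add_left measurable_const, lintegral_const, measure_univ, one_mul,
          lintegral_finsetSum _ fun n _ => (hF n).indicator (hE n)]
        simp_rw [lintegral_indicator (hE _)]
    _ ≤ _ := by
        gcongr with n
        simpa only [hsq] using
          setLIntegral_le_inv_mul_measure_add_mul_lintegral_sq (hF n) (c n) (E n)

lemma lintegral_exp_mul_sum_indicator_le_of_geometric [IsProbabilityMeasure μ]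
    {V : ℕ → Ω → ℝ} (hV : ∀ k ω, 0 ≤ V k ω) (hVm : ∀ k, Measurable (V k)) {E : ℕ → Set Ω}
    (hE : ∀ n, MeasurableSet (E n)) {s : ℝ} (hs : 0 ≤ s) {t L : ℝ≥0∞}
    (hEt : ∀ n, μ (E n) ≤ t ^ (2 * n))
    (hL : ∀ n, ∫⁻ ω, ENNReal.ofReal (exp (2 * s * ∑ k ∈ range n, V k ω)) ∂μ ≤ L ^ n) (N : ℕ) :
    ∫⁻ ω, ENNReal.ofReal (exp (s * ∑ k ∈ range N, (E k).indicator (V k) ω)) ∂μ ≤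
      1 + ((1 - t)⁻¹ + L * (1 - t * L)⁻¹) := by
  refine (lintegral_exp_mul_sum_indicator_le hV hVm hE hs (fun n => t ^ n) N).trans ?_
  gcongr 1 + ?_
  have hterm : ∀ n, (t ^ n)⁻¹ * μ (E n) + t ^ n *
      ∫⁻ ω, ENNReal.ofReal (exp (2 * s * ∑ k ∈ range (n + 1), V k ω)) ∂μ ≤
      t ^ n + L * (t * L) ^ n := fun n => by
    refine add_le_add ?_ ?_
    · calc (t ^ n)⁻¹ * μ (E n) ≤ (t ^ n)⁻¹ * (t ^ n * t ^ n) := by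
            gcongr; rw [← pow_add, ← two_mul]; exact hEt n
        _ = (t ^ n)⁻¹ * t ^ n * t ^ n := (mul_assoc _ _ _).symm
        _ ≤ 1 * t ^ n := by gcongr; exact ENNReal.inv_mul_le_one _
        _ = t ^ n := one_mul _
    · calc t ^ n * ∫⁻ ω, ENNReal.ofReal (exp (2 * s * ∑ k ∈ range (n + 1), V k ω)) ∂μ
          ≤ t ^ n * L ^ (n + 1) := by gcongr; exact hL (n + 1)
        _ = L * (t * L) ^ n := by ring
  calc _ ≤ ∑ n ∈ range N, (t ^ n + L * (t * L) ^ n) := sum_le_sum fun n _ => hterm n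
    _ = ∑ n ∈ range N, t ^ n + L * ∑ n ∈ range N, (t * L) ^ n := by
        rw [sum_add_distrib, mul_sum]
    _ ≤ _ := by
        gcongr <;> exact ENNReal.sum_range_pow_le_inv_one_sub _ N

lemma zero_mem_interior_integrableExpSet {Y : Ω → ℝ} (hY : Measurable Y) {θ : ℝ} (hθ : 0 < θ)
    (h : ∫⁻ ω, ENNReal.ofReal (exp (θ * |Y ω|)) ∂μ < ⊤) :
    0 ∈ interior (integrableExpSet Y μ) := by
  have hint : Integrable (fun ω => exp (θ * |Y ω|)) μ :=
    ⟨by fun_prop, (hasFiniteIntegral_iff_ofReal (ae_of_all _ fun _ => (exp_pos _).le)).2 h⟩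
  refine mem_interior.2 ⟨Set.Ioo (-θ) θ, fun t ht => ?_, isOpen_Ioo, by simpa using hθ⟩
  refine hint.mono' (by fun_prop) (ae_of_all _ fun ω => ?_)
  rw [norm_of_nonneg (exp_pos _).le]
  refine exp_le_exp.2 ((le_abs_self _).trans ?_)
  rw [abs_mul]
  exact mul_le_mul_of_nonneg_right (abs_lt.2 ht).le (abs_nonneg _)

lemma exists_neg_mem_integrableExpSet_mgf_lt_one [IsProbabilityMeasure μ] {Y : Ω → ℝ}
    (h0 : 0 ∈ interior (integrableExpSet Y μ)) (hmean : 0 < μ[Y]) :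
    ∃ α > 0, -α ∈ integrableExpSet Y μ ∧ mgf Y μ (-α) < 1 := by
  have hderiv : HasDerivAt (mgf Y μ) μ[Y] 0 := by
    simpa using hasDerivAt_mgf h0
  have hslope := hderiv.tendsto_slope_zero_left
  obtain ⟨t, ⟨hpos, hint⟩, ht⟩ := (((hslope.eventually (eventually_gt_nhds hmean)).and
    (nhdsWithin_le_nhds (mem_interior_iff_mem_nhds.1 h0))).and self_mem_nhdsWithin).exists
  refine ⟨-t, neg_pos.2 ht, by rwa [neg_neg], ?_⟩
  simp only [zero_add, mgf_zero, smul_eq_mul] at hpos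
  rw [neg_neg]
  exact sub_neg.1 ((neg_iff_neg_of_mul_pos hpos).1 (inv_lt_zero.2 ht))

lemma exists_measure_sum_lt_mul_le_pow [IsProbabilityMeasure μ] {X : ℕ → Ω → ℝ}
    (hind : iIndepFun X μ) (hXm : ∀ k, Measurable (X k))
    (hident : ∀ k, IdentDistrib (X k) (X 0) μ μ)
    (h0 : 0 ∈ interior (integrableExpSet (X 0) μ)) (hmean : 0 < μ[X 0]) :
    ∃ β > 0, ∃ r < 1, ∀ n : ℕ, μ {ω | ∑ i ∈ range n, X i ω < β * n} ≤ r ^ n := by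
  obtain ⟨α, hα, hint, hmgf⟩ := exists_neg_mem_integrableExpSet_mgf_lt_one h0 hmean
  have hcont : Tendsto (fun β => exp (α * β) * mgf (X 0) μ (-α)) (𝓝 0) (𝓝 (mgf (X 0) μ (-α))) :=
    (by fun_prop : Continuous fun β => exp (α * β) * mgf (X 0) μ (-α)).tendsto' 0 _ (by simp)
  obtain ⟨β, hρ, hβ⟩ := ((eventually_nhdsWithin_of_eventually_nhds
    (hcont.eventually (gt_mem_nhds hmgf))).and (self_mem_nhdsWithin (s := Set.Ioi 0))).exists
  refine ⟨β, hβ, ENNReal.ofReal (exp (α * β) * mgf (X 0) μ (-α)), ENNReal.ofReal_lt_one.2 hρ,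
    fun n => ?_⟩
  have hint_k : ∀ k ∈ range n, Integrable (fun ω => exp (-α * X k ω)) μ := fun k _ =>
    ((hident k).comp (measurable_exp.comp (measurable_const_mul (-α)))).integrable_iff.2 hint
  calc μ {ω | ∑ i ∈ range n, X i ω < β * n}
      ≤ μ {ω | (∑ i ∈ range n, X i) ω ≤ β * n} :=
        measure_mono fun ω hω => by simpa using le_of_lt hω
    _ = ENNReal.ofReal (μ.real {ω | (∑ i ∈ range n, X i) ω ≤ β * n}) :=
        (ofReal_measureReal (measure_ne_top _ _)).symm
    _ ≤ ENNReal.ofReal (exp (- -α * (β * n)) * mgf (∑ i ∈ range n, X i) μ (-α)) :=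
        ENNReal.ofReal_le_ofReal (measure_le_le_exp_mul_mgf _ (neg_nonpos.2 hα.le)
          (hind.integrable_exp_mul_sum hXm hint_k))
    _ = ENNReal.ofReal (exp (α * β) * mgf (X 0) μ (-α)) ^ n := by
        rw [hind.mgf_sum hXm, prod_congr rfl fun k _ =>
          mgf_congr_of_identDistrib _ _ (hident k) (-α), prod_const, card_range,
          ← ENNReal.ofReal_pow (mul_nonneg (exp_pos _).le mgf_nonneg), mul_pow, ← exp_nat_mul]
        ring_nf

section IndependentSums

variable {V : ℕ → Ω → ℝ} {δ m : ℝ}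

lemma lintegral_exp_mul_sum_le (hind : iIndepFun V μ) (hVm : ∀ k, Measurable (V k))
    (hm : 0 ≤ m) (hM : ∀ k, ∫⁻ ω, ENNReal.ofReal (exp (δ * V k ω)) ∂μ ≤ ENNReal.ofReal m)
    {w : ℕ → ℝ} (hw₀ : ∀ k, 0 ≤ w k) (hw₁ : ∀ k, w k ≤ 1) (s : Finset ℕ) :
    ∫⁻ ω, ENNReal.ofReal (exp (δ * ∑ k ∈ s, w k * V k ω)) ∂μ ≤
      ENNReal.ofReal (exp (m * ∑ k ∈ s, w k)) := by
  have := hind.isProbabilityMeasure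
  set g : ℕ → ℝ → ℝ≥0∞ := fun k v => ENNReal.ofReal (exp (w k * (δ * v)))
  have hg : ∀ k, Measurable (g k) := fun k => by fun_prop
  have hprod : ∀ ω, ENNReal.ofReal (exp (δ * ∑ k ∈ s, w k * V k ω)) =
      ∏ k ∈ s, g k (V k ω) := fun ω => by
    rw [← ENNReal.ofReal_prod_of_nonneg fun k _ => (exp_pos _).le, ← exp_sum, mul_sum]
    exact congrArg _ (congrArg _ (sum_congr rfl fun k _ => by ring))
  simp_rw [hprod]
  rw [lintegral_prod_eq_prod_lintegral_of_indepFun s (fun k ω => g k (V k ω))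
    (hind.comp g hg) fun k => (hg k).comp (hVm k), mul_sum, exp_sum,
    ENNReal.ofReal_prod_of_nonneg fun k _ => (exp_pos _).le]
  gcongr with k
  calc ∫⁻ ω, g k (V k ω) ∂μ
      ≤ ∫⁻ ω, (1 + ENNReal.ofReal (w k) * ENNReal.ofReal (exp (δ * V k ω))) ∂μ := by
        refine lintegral_mono fun ω => ?_
        rw [← ENNReal.ofReal_one, ← ENNReal.ofReal_mul (hw₀ k),
          ← ENNReal.ofReal_add zero_le_one (mul_nonneg (hw₀ k) (exp_pos _).le)]
        exact ENNReal.ofReal_le_ofReal (exp_mul_le_one_add_mul_exp (hw₀ k) (hw₁ k) _)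
    _ ≤ 1 + ENNReal.ofReal (w k) * ENNReal.ofReal m := by
        rw [lintegral_add_left measurable_const, lintegral_const, measure_univ, one_mul,
          lintegral_const_mul _ (by fun_prop)]
        gcongr
        exact hM k
    _ ≤ ENNReal.ofReal (exp (m * w k)) := by
        rw [← ENNReal.ofReal_mul (hw₀ k), ← ENNReal.ofReal_one,
          ← ENNReal.ofReal_add zero_le_one (mul_nonneg (hw₀ k) hm)]
        exact ENNReal.ofReal_le_ofReal (by linarith [add_one_le_exp (m * w k)])

lemma lintegral_exp_mul_sum_geometric_le (hind : iIndepFun V μ) (hVm : ∀ k, Measurable (V k))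
    (hm : 0 ≤ m) (hM : ∀ k, ∫⁻ ω, ENNReal.ofReal (exp (δ * V k ω)) ∂μ ≤ ENNReal.ofReal m)
    {η q : ℝ} (hη₀ : 0 ≤ η) (hη₁ : η ≤ 1) (hq₀ : 0 ≤ q) (hq₁ : q < 1) (N : ℕ) :
    ∫⁻ ω, ENNReal.ofReal (exp (η * δ * ∑ k ∈ range N, q ^ k * V k ω)) ∂μ ≤
      ENNReal.ofReal (exp (m * (η / (1 - q)))) := by
  have hw : ∀ k : ℕ, η * q ^ k ≤ 1 := fun k =>
    (mul_le_of_le_one_right hη₀ (pow_le_one₀ hq₀ hq₁.le)).trans hη₁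
  have hgeom : ∑ k ∈ range N, q ^ k ≤ 1 / (1 - q) := by
    simpa using geom_sum_Ico_le_of_lt_one (m := 0) (n := N) hq₀ hq₁
  have hrw : ∀ ω, η * δ * ∑ k ∈ range N, q ^ k * V k ω =
      δ * ∑ k ∈ range N, η * q ^ k * V k ω := fun ω => by
    simp only [mul_sum]; exact sum_congr rfl fun k _ => by ring
  simp_rw [hrw]
  refine (lintegral_exp_mul_sum_le hind hVm hm hM (fun k => by positivity) hw _).trans ?_
  rw [← mul_sum, div_eq_mul_one_div]
  gcongr

lemma lintegral_exp_mul_sum_range_le_pow (hind : iIndepFun V μ) (hVm : ∀ k, Measurable (V k))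
    (hm : 0 ≤ m) (hM : ∀ k, ∫⁻ ω, ENNReal.ofReal (exp (δ * V k ω)) ∂μ ≤ ENNReal.ofReal m)
    {η : ℝ} (hη₀ : 0 ≤ η) (hη₁ : η ≤ 1) (n : ℕ) :
    ∫⁻ ω, ENNReal.ofReal (exp (η * δ * ∑ k ∈ range n, V k ω)) ∂μ ≤
      ENNReal.ofReal (exp (m * η)) ^ n := by
  have hrw : ∀ ω, η * δ * ∑ k ∈ range n, V k ω = δ * ∑ k ∈ range n, η * V k ω := fun ω => by
    rw [← mul_sum]; ring
  simp_rw [hrw]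
  refine (lintegral_exp_mul_sum_le hind hVm hm hM (fun _ => hη₀) (fun _ => hη₁) _).trans_eq ?_
  rw [sum_const, card_range, nsmul_eq_mul, ← ENNReal.ofReal_pow (exp_pos _).le, ← exp_nat_mul]
  ring_nf

lemma exists_lintegral_exp_mul_damped_sum_le (hV : ∀ k ω, 0 ≤ V k ω) (hind : iIndepFun V μ)
    (hVm : ∀ k, Measurable (V k)) (hδ : 0 < δ) (hm : 0 ≤ m)
    (hM : ∀ k, ∫⁻ ω, ENNReal.ofReal (exp (δ * V k ω)) ∂μ ≤ ENNReal.ofReal m)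
    {E : ℕ → Set Ω} (hE : ∀ n, MeasurableSet (E n)) {r : ℝ≥0∞} (hr : r < 1)
    (hEr : ∀ n, μ (E n) ≤ r ^ n) {q : ℝ} (hq₀ : 0 ≤ q) (hq₁ : q < 1) :
    ∃ s > 0, ∃ K ≠ ⊤, ∀ N, ∫⁻ ω, ENNReal.ofReal (exp (s *
      ∑ k ∈ range N, (q ^ k * V k ω + (E k).indicator (V k) ω))) ∂μ ≤ K := by
  have := hind.isProbabilityMeasure
  set t := r ^ ((2 : ℕ)⁻¹ : ℝ)
  have ht : t < 1 := ENNReal.rpow_lt_one hr (by norm_num)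
  have hEt : ∀ n, μ (E n) ≤ t ^ (2 * n) := fun n => by
    rw [pow_mul, ENNReal.rpow_inv_natCast_pow two_ne_zero]; exact hEr n
  have hlim : Tendsto (fun η : ℝ => t * ENNReal.ofReal (exp (m * (2 * η)))) (𝓝 0) (𝓝 t) :=
    ((ENNReal.continuous_const_mul ht.ne_top).comp
      (ENNReal.continuous_ofReal.comp (by fun_prop))).tendsto' 0 t (by simp)
  obtain ⟨η, ⟨htL, hη₁⟩, hη₀ : 0 < η⟩ := (((hlim.eventually (gt_mem_nhds ht)).and
    (eventually_le_nhds (by norm_num : (0 : ℝ) < 1 / 2))).filter_mono nhdsWithin_le_nhds |>.and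
    (self_mem_nhdsWithin (s := Set.Ioi 0))).exists
  set L := ENNReal.ofReal (exp (m * (2 * η)))
  refine ⟨η * δ / 2, by positivity, ENNReal.ofReal (exp (m * (η / (1 - q)))) +
    (1 + ((1 - t)⁻¹ + L * (1 - t * L)⁻¹)), ?_, fun N => ?_⟩
  · have h₁ : (1 - t)⁻¹ ≠ ⊤ := ENNReal.inv_ne_top.2 (tsub_pos_of_lt ht).ne'
    have h₂ : (1 - t * L)⁻¹ ≠ ⊤ := ENNReal.inv_ne_top.2 (tsub_pos_of_lt htL).ne'
    simp [ENNReal.add_eq_top, ENNReal.mul_eq_top, h₁, h₂, L]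
  simp only [sum_add_distrib]
  refine (lintegral_exp_mul_add_le (by fun_prop) _).trans (add_le_add ?_ ?_)
  · rw [show 2 * (η * δ / 2) = η * δ by ring]
    exact lintegral_exp_mul_sum_geometric_le hind hVm hm hM hη₀.le (by linarith) hq₀ hq₁ N
  · refine lintegral_exp_mul_sum_indicator_le_of_geometric hV hVm hE (by positivity) hEt
      (fun n => ?_) N
    rw [show 2 * (2 * (η * δ / 2)) = 2 * η * δ by ring]
    exact lintegral_exp_mul_sum_range_le_pow hind hVm hm hM (by positivity) (by linarith) n

end IndependentSums

end

theorem positive_drift_perpetuity_exponential_moment_general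
    {Ω : Type*} [MeasurableSpace Ω] (P : Measure Ω) [IsProbabilityMeasure P]
    (X Q : ℕ → Ω → ℝ)
    (hmeas : ∀ k, Measurable fun ω => (X k ω, Q k ω))
    (hindep : ProbabilityTheory.iIndepFun
      (fun k ω => (X k ω, Q k ω)) P)
    (hident : ∀ k, Measure.map (fun ω => (X k ω, Q k ω)) P
      = Measure.map (fun ω => (X 0 ω, Q 0 ω)) P)
    (hXdrift : 0 < ∫ ω, X 0 ω ∂P)
    (hXexp : ∃ θ > (0 : ℝ), ∫⁻ ω, ENNReal.ofReal (exp (θ * |X 0 ω|)) ∂P < ⊤)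
    (hQexp : ∃ δ > (0 : ℝ), ∫⁻ ω, ENNReal.ofReal (exp (δ * Q 0 ω)) ∂P < ⊤) :
    ∃ ε > (0 : ℝ), ∀ x ≥ (0 : ℝ),
      ∫⁻ ω, expE (ENNReal.ofReal ε *
          ∑' k : ℕ,
            (if 0 ≤ x + ∑ i ∈ Finset.range k, X i ω then
              ENNReal.ofReal (exp (-(x + ∑ i ∈ Finset.range k, X i ω)) * Q k ω) else 0))
        ∂P ≤ 2 := by
  obtain ⟨θ, hθ, hθfin⟩ := hXexp
  obtain ⟨δ, hδ, hδfin⟩ := hQexp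
  set V : ℕ → Ω → ℝ := fun k ω => max (Q k ω) 0
  have hXm : ∀ k, Measurable (X k) := fun k => measurable_fst.comp (hmeas k)
  have hQm : ∀ k, Measurable (Q k) := fun k => measurable_snd.comp (hmeas k)
  have hpair : ∀ k, IdentDistrib (fun ω => (X k ω, Q k ω)) (fun ω => (X 0 ω, Q 0 ω)) P P :=
    fun k => ⟨(hmeas k).aemeasurable, (hmeas 0).aemeasurable, hident k⟩
  obtain ⟨β, hβ, r, hr, hEr⟩ := exists_measure_sum_lt_mul_le_pow
    (hindep.comp (fun _ => Prod.fst) fun _ => measurable_fst) hXm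
    (fun k => (hpair k).comp measurable_fst) (zero_mem_interior_integrableExpSet (hXm 0) hθ hθfin)
    hXdrift
  have hM : ∀ k, ∫⁻ ω, ENNReal.ofReal (exp (δ * V k ω)) ∂P ≤
      ENNReal.ofReal (∫⁻ ω, ENNReal.ofReal (exp (δ * V 0 ω)) ∂P).toReal := fun k => by
    rw [ENNReal.ofReal_toReal (lintegral_exp_mul_max_zero_ne_top hδfin)]
    exact ((hpair k).comp (u := fun p : ℝ × ℝ => ENNReal.ofReal (exp (δ * max p.2 0)))
      (by fun_prop)).lintegral_eq.le
  obtain ⟨s, hs, K, hK, hZ⟩ := exists_lintegral_exp_mul_damped_sum_le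
    (fun k ω => le_max_right _ _) (hindep.comp (fun _ p => max p.2 0) fun _ => by fun_prop)
    (fun k => (hQm k).max measurable_const) hδ ENNReal.toReal_nonneg hM
    (fun n => measurableSet_lt (measurable_sum _ fun i _ => hXm i) measurable_const) hr hEr
    (exp_pos (-β)).le (exp_lt_one_iff.2 (neg_lt_zero.2 hβ))
  obtain ⟨ε, hε, h2⟩ := exists_lintegral_exp_mul_le_two hs hK hZ
  exact ⟨ε, hε, fun x hx => lintegral_expE_mul_tsum_ite_le hXm hQm hx hε.le β h2⟩

/-- **Positive-drift perpetuity bound.** Let `((X_k, Q_k))_{k ≥ 1}` be i.i.d. pairs of real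
random variables with `Q_1 ≥ 0` a.s., `E[X_1] > 0`, `E[e^{θ|X_1|}] < ∞` for some `θ > 0`,
and `E[e^{δ Q_1}] < ∞` for some `δ > 0`. For `x ≥ 0`, set `S_0 := x` and
`S_n := x + X_1 + ⋯ + X_n`. Then there exists `ε > 0` such that
`sup_{x ≥ 0} E[exp (ε ∑_{k=0}^∞ e^{-S_k} 1{S_k ≥ 0} Q_{k+1})] ≤ 2`.
(Here the pairs are indexed by `k : ℕ`, pair `k` standing for `(X_{k+1}, Q_{k+1})`, so that
`S_k = x + ∑_{i < k} X_i` is coupled with `Q` of index `k`.) -/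
theorem positive_drift_perpetuity_exponential_moment
    {Ω : Type*} [MeasurableSpace Ω] (P : Measure Ω) [IsProbabilityMeasure P]
    (X Q : ℕ → Ω → ℝ)
    (hmeas : ∀ k, Measurable fun ω => (X k ω, Q k ω))
    (hindep : ProbabilityTheory.iIndepFun
      (fun k ω => (X k ω, Q k ω)) P)
    (hident : ∀ k, Measure.map (fun ω => (X k ω, Q k ω)) P
      = Measure.map (fun ω => (X 0 ω, Q 0 ω)) P)
    (hQnonneg : ∀ k, ∀ᵐ ω ∂P, 0 ≤ Q k ω)
    (hXint : Integrable (X 0) P) (hXdrift : 0 < ∫ ω, X 0 ω ∂P)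
    (hXexp : ∃ θ > (0 : ℝ), ∫⁻ ω, ENNReal.ofReal (exp (θ * |X 0 ω|)) ∂P < ⊤)
    (hQexp : ∃ δ > (0 : ℝ), ∫⁻ ω, ENNReal.ofReal (exp (δ * Q 0 ω)) ∂P < ⊤) :
    ∃ ε > (0 : ℝ), ∀ x ≥ (0 : ℝ),
      ∫⁻ ω, expE (ENNReal.ofReal ε *
          ∑' k : ℕ,
            (if 0 ≤ x + ∑ i ∈ Finset.range k, X i ω then
              ENNReal.ofReal (exp (-(x + ∑ i ∈ Finset.range k, X i ω)) * Q k ω) else 0))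
        ∂P ≤ 2 :=
  positive_drift_perpetuity_exponential_moment_general P X Q hmeas hindep hident hXdrift hXexp hQexp
end
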